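/- arXiv:1906.10097 — 6 statements merged into one kernel-verified Lean document; each statement's English description precedes it below -/
import Mathlib

section
/- Let n ≥ 1 and Q ≥ 2. Let A = (a₁,…,a_{Q−1}) and B = (b₁,…,b_{Q−1}) be (Q−1)-tuples of points of ℝⁿ, and let A₀, B₀ ∈ (ℝⁿ)^Q be the Q-tuples obtained from A and B by appending the point 0. Then 𝒢(A₀, B₀) ≤ 𝒢(A, B) ≤ √2 · 𝒢(A₀, B₀). -/
/-!
A matching of `A` with `B` extends, at the same cost, to a matching of `A₀` with `B₀` that pairs
the two appended zeros; this gives `𝒢(A₀, B₀) ≤ 𝒢(A, B)`. Conversely, if a matching of `A₀` with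
`B₀` pairs `aⱼ` with `0` and `0` with `b_k`, rematching `aⱼ` with `b_k` and `0` with `0` replaces
`‖aⱼ‖² + ‖b_k‖²` by `‖aⱼ - b_k‖² ≤ 2 (‖aⱼ‖² + ‖b_k‖²)`. The cost at most doubles, and the new
matching restricts to a matching of `A` with `B`.
-/

/-- The metric `𝒢` on unordered `Q`-tuples of points of `ℝⁿ`: the minimum over permutations
`σ` of `(Σᵢ ‖Pᵢ − R_{σ(i)}‖²)^{1/2}`. -/
noncomputable def Gdist {n Q : ℕ} (P R : Fin Q → EuclideanSpace ℝ (Fin n)) : ℝ :=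
  ⨅ σ : Equiv.Perm (Fin Q), Real.sqrt (∑ i, ‖P i - R (σ i)‖ ^ 2)

open Equiv Finset

variable {ι κ E : Type*} [Fintype ι] [SeminormedAddCommGroup E]

def matchingCost (P R : ι → E) (σ : Perm ι) : ℝ := ∑ i, ‖P i - R (σ i)‖ ^ 2

noncomputable def matchingDist (P R : ι → E) : ℝ := ⨅ σ : Perm ι, √(matchingCost P R σ)

lemma matchingCost_nonneg (P R : ι → E) (σ : Perm ι) : 0 ≤ matchingCost P R σ :=
  sum_nonneg fun _ _ => sq_nonneg _

lemma matchingDist_le_sqrt_matchingCost (P R : ι → E) (σ : Perm ι) :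
    matchingDist P R ≤ √(matchingCost P R σ) :=
  ciInf_le ⟨0, Set.forall_mem_range.2 fun _ => Real.sqrt_nonneg _⟩ σ

lemma matchingDist_comp_equiv [Fintype κ] (e : κ ≃ ι) (P R : ι → E) :
    matchingDist (P ∘ e) (R ∘ e) = matchingDist P R := by
  refine e.permCongr.iInf_congr fun σ => ?_
  simp only [matchingCost, Function.comp_apply, permCongr_apply, ← e.sum_comp, symm_apply_apply]

lemma matchingCost_optionCongr (P R : ι → E) (σ : Perm ι) :
    matchingCost (Option.elim' 0 P) (Option.elim' 0 R) σ.optionCongr = matchingCost P R σ := by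
  simp [matchingCost, Fintype.sum_option]

lemma matchingCost_swap_mul_le [DecidableEq ι] {P R : ι → E} {l : ι} (hP : P l = 0)
    (hR : R l = 0) (π : Perm ι) :
    matchingCost P R (swap l (π l) * π) ≤ 2 * matchingCost P R π := by
  set j := π.symm l
  have hπj : π j = l := π.apply_symm_apply l
  by_cases hjl : j = l
  · rw [hjl] at hπj
    rw [hπj, swap_self, ← Perm.one_def, one_mul]
    linarith [matchingCost_nonneg P R π]
  have hagree : ∀ i ∈ ({j, l} : Finset ι)ᶜ, (swap l (π l) * π) i = π i := by
    intro i hi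
    simp only [mem_compl, mem_insert, mem_singleton, not_or] at hi
    exact swap_apply_of_ne_of_ne (fun h => hi.1 (π.injective (h.trans hπj.symm)))
      (π.injective.ne hi.2)
  have hpoint : ‖P j - R (π l)‖ ^ 2 ≤ 2 * (‖P j‖ ^ 2 + ‖R (π l)‖ ^ 2) :=
    (pow_le_pow_left₀ (norm_nonneg _) (norm_sub_le _ _) 2).trans add_sq_le
  have hrest : 0 ≤ ∑ i ∈ ({j, l} : Finset ι)ᶜ, ‖P i - R (π i)‖ ^ 2 :=
    sum_nonneg fun _ _ => sq_nonneg _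
  -- Only the pairs at `j = π⁻¹ l` and `l` change: `‖P j‖² + ‖R (π l)‖²` becomes `‖P j - R (π l)‖²`.
  rw [matchingCost, matchingCost, ← sum_add_sum_compl {j, l}, ← sum_add_sum_compl {j, l},
    sum_pair hjl, sum_pair hjl, sum_congr rfl fun i hi => by rw [hagree i hi]]
  simp only [Perm.mul_apply, hπj, swap_apply_left, swap_apply_right, hP, hR, sub_zero, zero_sub,
    norm_neg, norm_zero, ne_eq, OfNat.ofNat_ne_zero, not_false_eq_true, zero_pow]
  linarith

lemma matchingDist_optionElim'_zero_le (P R : ι → E) :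
    matchingDist (Option.elim' 0 P) (Option.elim' 0 R) ≤ matchingDist P R :=
  le_ciInf fun σ => matchingCost_optionCongr P R σ ▸ matchingDist_le_sqrt_matchingCost _ _ _

lemma matchingDist_le_sqrt_two_mul_optionElim'_zero (P R : ι → E) :
    matchingDist P R ≤ √2 * matchingDist (Option.elim' 0 P) (Option.elim' 0 R) := by
  classical
  conv_rhs => rw [matchingDist, Real.mul_iInf_of_nonneg (Real.sqrt_nonneg 2)]
  refine le_ciInf fun π => ?_
  have hcost : matchingCost P R (removeNone π) ≤
      2 * matchingCost (Option.elim' 0 P) (Option.elim' 0 R) π := by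
    rw [← matchingCost_optionCongr, map_equiv_removeNone]
    exact matchingCost_swap_mul_le (l := none) rfl rfl π
  calc matchingDist P R ≤ √(matchingCost P R (removeNone π)) :=
        matchingDist_le_sqrt_matchingCost _ _ _
    _ ≤ √(2 * matchingCost (Option.elim' 0 P) (Option.elim' 0 R) π) := Real.sqrt_le_sqrt hcost
    _ = √2 * √(matchingCost (Option.elim' 0 P) (Option.elim' 0 R) π) := Real.sqrt_mul zero_le_two _

lemma Fin.snoc_eq_optionElim'_comp {α : Type*} {m : ℕ} (A : Fin m → α) (a : α) :
    Fin.snoc A a = Option.elim' a A ∘ finSuccEquivLast := by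
  ext i
  cases i using Fin.lastCases <;> simp

theorem statement4_general {n Q : ℕ}
    (A B : Fin (Q - 1) → EuclideanSpace ℝ (Fin n)) :
    Gdist (Fin.snoc A 0) (Fin.snoc B 0) ≤ Gdist A B ∧
      Gdist A B ≤ Real.sqrt 2 * Gdist (Fin.snoc A 0) (Fin.snoc B 0) := by
  have hsnoc : Gdist (Fin.snoc A 0) (Fin.snoc B 0) =
      matchingDist (Option.elim' 0 A) (Option.elim' 0 B) := by
    rw [Fin.snoc_eq_optionElim'_comp, Fin.snoc_eq_optionElim'_comp]
    exact matchingDist_comp_equiv finSuccEquivLast _ _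
  rw [hsnoc]
  exact ⟨matchingDist_optionElim'_zero_le A B, matchingDist_le_sqrt_two_mul_optionElim'_zero A B⟩

/-- Appending the point `0` to two `(Q−1)`-tuples `A`, `B` produces `Q`-tuples `A₀`, `B₀` with
`𝒢(A₀,B₀) ≤ 𝒢(A,B) ≤ √2 · 𝒢(A₀,B₀)`. -/
theorem statement4 {n Q : ℕ} (hn : 1 ≤ n) (hQ : 2 ≤ Q)
    (A B : Fin (Q - 1) → EuclideanSpace ℝ (Fin n)) :
    Gdist (Fin.snoc A 0) (Fin.snoc B 0) ≤ Gdist A B ∧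
      Gdist A B ≤ Real.sqrt 2 * Gdist (Fin.snoc A 0) (Fin.snoc B 0) :=
  statement4_general A B
end

section
/- Let Q₀ ≥ 2 and l ≥ 1 be integers with (Q₀, l) ≠ (2, 2). Then there exist a real number θ with 0 ≤ θ and a positive integer k such that θ + 4πk/(2Q₀−1) < 2π and sin(lθ/2) = sin( (l/2)·(θ + 4πk/(2Q₀−1)) ). Conversely, for Q₀ = 2 and l = 2 no such pair (θ, k) exists: for every θ ∈ [0, 2π/3) one has sin(θ) ≠ sin(θ + 4π/3). -/
open Real

set_option maxHeartbeats 1000000 in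
/-- Trigonometric dichotomy behind the classification of irreducible homogeneous pieces:
for integers `Q₀ ≥ 2`, `l ≥ 1` with `(Q₀,l) ≠ (2,2)` there exist `θ ≥ 0` and a positive
integer `k` with `θ + 4πk/(2Q₀−1) < 2π` and `sin(lθ/2) = sin((l/2)(θ + 4πk/(2Q₀−1)))`;
conversely, for `Q₀ = l = 2` no such pair exists: `sin θ ≠ sin(θ + 4π/3)` for all
`θ ∈ [0, 2π/3)`. -/
theorem statement7 (Q₀ l : ℕ) (hQ₀ : 2 ≤ Q₀) (hl : 1 ≤ l) (hne : ¬(Q₀ = 2 ∧ l = 2)) :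
    (∃ θ : ℝ, ∃ k : ℕ, 0 ≤ θ ∧ 1 ≤ k ∧
      θ + 4 * π * (k : ℝ) / (2 * (Q₀ : ℝ) - 1) < 2 * π ∧
      Real.sin ((l : ℝ) * θ / 2) =
        Real.sin (((l : ℝ) / 2) * (θ + 4 * π * (k : ℝ) / (2 * (Q₀ : ℝ) - 1)))) ∧
    (∀ θ : ℝ, 0 ≤ θ → θ < 2 * π / 3 → Real.sin θ ≠ Real.sin (θ + 4 * π / 3)) := by
  have hπ := Real.pi_pos
  constructor
  · -- existence part
    set N : ℝ := 2 * (Q₀ : ℝ) - 1 with hNdef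
    have hQ₀R : (2:ℝ) ≤ (Q₀:ℝ) := by exact_mod_cast hQ₀
    have hN3 : (3:ℝ) ≤ N := by rw [hNdef]; linarith
    have hN0 : (0:ℝ) < N := by linarith
    have hl1 : (1:ℝ) ≤ (l:ℝ) := by exact_mod_cast hl
    have hl0 : (0:ℝ) < (l:ℝ) := by linarith
    set a : ℝ := 2 * (l:ℝ) / N with hadef
    have ha0 : 0 < a := by positivity
    have haN : a * N = 2 * (l:ℝ) := by rw [hadef]; field_simp
    have ha23 : a * 3 ≤ 2 * (l:ℝ) := by nlinarith
    set m : ℕ := ⌈(a - 1)/2⌉₊ with hmdef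
    have hm_lb : a ≤ 2 * (m:ℝ) + 1 := by
      have h := Nat.le_ceil ((a - 1)/2)
      rw [← hmdef] at h
      linarith
    have hm_ub : 2 * (m:ℝ) + 1 < 2 * (l:ℝ) - a := by
      by_cases hc : a ≤ 1
      · have hm0 : m = 0 := by rw [hmdef]; exact Nat.ceil_eq_zero.mpr (by linarith)
        rw [hm0]
        push_cast
        nlinarith
      · push_neg at hc
        have hmlt : (m:ℝ) < (a - 1)/2 + 1 := by
          rw [hmdef]; exact Nat.ceil_lt_add_one (by linarith)
        -- so 2m+1 < a+2; suffices a + 2 ≤ 2l - a, i.e. 2a + 2 ≤ 2l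
        have key : 2 * a + 2 ≤ 2 * (l:ℝ) := by
          by_cases hQ2 : Q₀ = 2
          · have hl2 : l ≠ 2 := fun h => hne ⟨hQ2, h⟩
            have hNval : N = 3 := by rw [hNdef, hQ2]; norm_num
            -- a = 2l/3 > 1 ⇒ l ≥ 2, l ≠ 2 ⇒ l ≥ 3
            rw [hNval] at haN
            have hlge2 : (1:ℝ) < (l:ℝ) := by nlinarith
            have hlge2' : 1 < l := by exact_mod_cast hlge2
            have hlge3 : 3 ≤ l := by omega
            have hlR : (3:ℝ) ≤ (l:ℝ) := by exact_mod_cast hlge3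
            nlinarith
          · have hQ3 : 3 ≤ Q₀ := by omega
            have hQ3R : (3:ℝ) ≤ (Q₀:ℝ) := by exact_mod_cast hQ3
            have hN5 : (5:ℝ) ≤ N := by rw [hNdef]; linarith
            -- a > 1 and aN = 2l give 2l > 5, so l ≥ 3
            have hlR : (3:ℝ) ≤ (l:ℝ) := by
              have : (2:ℝ) * l > 5 := by nlinarith
              have : (2:ℝ) < (l:ℝ) := by linarith
              have : 2 < l := by exact_mod_cast this
              exact_mod_cast this
            nlinarith
        linarith
    refine ⟨(2*(m:ℝ)+1) * π / (l:ℝ) - 2*π/N, 1, ?_, le_refl 1, ?_, ?_⟩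
    · rw [sub_nonneg, div_le_div_iff₀ hN0 hl0]
      nlinarith [mul_le_mul_of_nonneg_right hm_lb hN0.le]
    · have heq : (2*(m:ℝ)+1) * π / (l:ℝ) - 2*π/N + 4 * π * ((1:ℕ):ℝ) / N
          = (2*(m:ℝ)+1) * π / (l:ℝ) + 2*π/N := by push_cast; ring
      rw [heq, div_add_div _ _ (ne_of_gt hl0) (ne_of_gt hN0), div_lt_iff₀ (by positivity)]
      nlinarith [mul_lt_mul_of_pos_right hm_ub hN0, mul_pos hπ hN0, mul_pos hπ hl0]
    · have hc0 : Real.cos ((2*(m:ℝ)+1) * π / 2) = 0 := by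
        rw [Real.cos_eq_zero_iff]
        exact ⟨(m:ℤ), by push_cast; ring⟩
      have e1 : (l:ℝ) * ((2*(m:ℝ)+1) * π / (l:ℝ) - 2*π/N) / 2
          = (2*(m:ℝ)+1) * π / 2 - (l:ℝ)*π/N := by
        field_simp
      have e2 : ((l:ℝ)/2) * ((2*(m:ℝ)+1) * π / (l:ℝ) - 2*π/N + 4 * π * ((1:ℕ):ℝ) / N)
          = (2*(m:ℝ)+1) * π / 2 + (l:ℝ)*π/N := by
        push_cast
        field_simp
        ring
      rw [e1, e2, Real.sin_sub, Real.sin_add, hc0]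
      ring
  · -- converse part
    intro θ h0 h1 heq
    have h2 := Real.sin_sub_sin (θ + 4*π/3) θ
    have e1 : (θ + 4*π/3 - θ)/2 = 2*π/3 := by ring
    have e2 : (θ + 4*π/3 + θ)/2 = θ + 2*π/3 := by ring
    rw [e1, e2] at h2
    have hzero : 2 * Real.sin (2*π/3) * Real.cos (θ + 2*π/3) = 0 := by
      rw [← h2]; linarith [heq]
    have hsinpos : 0 < Real.sin (2*π/3) :=
      Real.sin_pos_of_pos_of_lt_pi (by linarith) (by linarith)
    have hcos : Real.cos (θ + 2*π/3) = 0 := by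
      rcases mul_eq_zero.mp hzero with h | h
      · rcases mul_eq_zero.mp h with h' | h'
        · norm_num at h'
        · linarith
      · exact h
    rw [Real.cos_eq_zero_iff] at hcos
    obtain ⟨n, hn⟩ := hcos
    have hb1 : 2*π/3 ≤ (2*(n:ℝ)+1)*π/2 := by rw [← hn]; linarith
    have hb2 : (2*(n:ℝ)+1)*π/2 < 4*π/3 := by rw [← hn]; linarith
    have hn1 : (0:ℝ) < (n:ℝ) := by nlinarith
    have hn2 : (n:ℝ) < 1 := by nlinarith
    have : (0:ℤ) < n := by exact_mod_cast hn1
    have : (n:ℝ) ≥ 1 := by exact_mod_cast this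
    linarith
end

section
/- Let n ≥ 1, α > 0, and let u : {(x₁,x₂) ∈ ℝ² : x₂ ≥ 0} → ℝⁿ be continuous, harmonic on the open upper half-plane {x₂ > 0}, vanish identically on the boundary line (u(t,0) = 0 for all t ∈ ℝ), be α-homogeneous (u(λp) = λ^α u(p) for all λ > 0 and all p with p₂ ≥ 0), and not be identically zero. Then α is a positive integer l, and there exists a nonzero vector c ∈ ℝⁿ such that u(r cos θ, r sin θ) = c · r^l · sin(lθ) for all r ≥ 0 and θ ∈ [0, π]. -/
open Real

/-- A function `f : ℝ² → ℝⁿ` is harmonic on an open set `U` if it is twice continuously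
differentiable there and its Laplacian `∂²f/∂x₁² + ∂²f/∂x₂²` vanishes on `U`. -/
def HarmonicOn {n : ℕ} (f : ℝ × ℝ → EuclideanSpace ℝ (Fin n)) (U : Set (ℝ × ℝ)) : Prop :=
  ContDiffOn ℝ 2 f U ∧ ∀ x ∈ U,
    fderivWithin ℝ (fun y => fderivWithin ℝ f U y ((1 : ℝ), (0 : ℝ))) U x ((1 : ℝ), (0 : ℝ)) +
      fderivWithin ℝ (fun y => fderivWithin ℝ f U y ((0 : ℝ), (1 : ℝ))) U x ((0 : ℝ), (1 : ℝ)) = 0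

/-!
Euler's relation `Du(x) x = α u(x)` and its derivative `D²u(x)(v, x) = (α - 1) Du(x) v` determine
the radial second derivative of `u`. As the Laplacian is the trace of `D²u` in any orthonormal
frame, the restriction `g θ = u(cos θ, sin θ)` to the unit circle satisfies `g'' = -α² g` on
`(0, π)`, so `g = cos(αθ) A + sin(αθ) B`. The boundary condition at `θ = 0` gives `A = 0`, the one
at `θ = π` gives `sin(απ) B = 0`, and `B ≠ 0` because `u` is nontrivial, so `α` is a positive
integer. Homogeneity carries the formula from the circle to the half-plane.
-/

open Set Filter Topology

section
variable {E F : Type*} [NormedAddCommGroup E] [NormedSpace ℝ E]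
  [NormedAddCommGroup F] [NormedSpace ℝ F]

theorem eq_cos_smul_add_sin_smul_of_hasDerivAt {α a b : ℝ} (hα : α ≠ 0) {g g' : ℝ → E}
    (hg : ∀ θ ∈ Ioo a b, HasDerivAt g (g' θ) θ)
    (hg' : ∀ θ ∈ Ioo a b, HasDerivAt g' (-(α ^ 2) • g θ) θ) :
    ∃ A B : E, EqOn g (fun θ => cos (α * θ) • A + sin (α * θ) • B) (Ioo a b) := by
  have hcos (θ : ℝ) : HasDerivAt (fun t => cos (α * t)) (-(α * sin (α * θ))) θ := by
    simpa [mul_comm] using ((hasDerivAt_id θ).const_mul α).cos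
  have hsin (θ : ℝ) : HasDerivAt (fun t => sin (α * t)) (α * cos (α * θ)) θ := by
    simpa [mul_comm] using ((hasDerivAt_id θ).const_mul α).sin
  have const_of_hasDerivAt_zero {P : ℝ → E} (hP : ∀ θ ∈ Ioo a b, HasDerivAt P 0 θ) :
      ∃ A, ∀ θ ∈ Ioo a b, P θ = A :=
    isOpen_Ioo.exists_is_const_of_deriv_eq_zero isPreconnected_Ioo
      (fun θ hθ => (hP θ hθ).differentiableAt.differentiableWithinAt)
      (fun θ hθ => (hP θ hθ).deriv)
  -- the two first integrals of `g'' = -α² g` whose combination recovers `g`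
  obtain ⟨A, hA⟩ := const_of_hasDerivAt_zero
    (P := fun θ => cos (α * θ) • g θ - (α⁻¹ * sin (α * θ)) • g' θ) fun θ hθ => by
      refine (((hcos θ).smul (hg θ hθ)).sub
        (((hsin θ).const_mul α⁻¹).smul (hg' θ hθ))).congr_deriv ?_
      match_scalars <;> field_simp <;> ring
  obtain ⟨B, hB⟩ := const_of_hasDerivAt_zero
    (P := fun θ => sin (α * θ) • g θ + (α⁻¹ * cos (α * θ)) • g' θ) fun θ hθ => by
      refine (((hsin θ).smul (hg θ hθ)).add
        (((hcos θ).const_mul α⁻¹).smul (hg' θ hθ))).congr_deriv ?_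
      match_scalars <;> field_simp <;> ring
  refine ⟨A, B, fun θ hθ => ?_⟩
  simp only [← hA θ hθ, ← hB θ hθ]
  match_scalars
  · linear_combination -sin_sq_add_cos_sq (α * θ)
  · ring

theorem HasFDerivAt.apply_self_eq_smul_of_homogeneous {u : E → F} {u' : E →L[ℝ] F} {x : E}
    {α : ℝ} (hu : HasFDerivAt u u' x)
    (hhom : ∀ᶠ lam in 𝓝 (1 : ℝ), u (lam • x) = lam ^ α • u x) :
    u' x = α • u x := by
  have hray : HasDerivAt (fun lam : ℝ => u (lam • x)) (u' x) 1 := by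
    rw [← one_smul ℝ x] at hu
    simpa [Function.comp_def] using
      hu.comp_hasDerivAt (1 : ℝ) ((hasDerivAt_id (1 : ℝ)).smul_const x)
  have hpow : HasDerivAt (fun lam : ℝ => lam ^ α • u x) (α • u x) 1 := by
    simpa using (hasDerivAt_rpow_const (x := 1) (p := α) (Or.inl one_ne_zero)).smul_const (u x)
  exact hray.unique (hpow.congr_of_eventuallyEq hhom)

theorem fderiv_fderiv_apply_self_of_euler {u : E → F} {H : E →L[ℝ] E →L[ℝ] F} {x : E} {α : ℝ}
    (hu : DifferentiableAt ℝ u x) (hH : HasFDerivAt (fderiv ℝ u) H x)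
    (heuler : ∀ᶠ y in 𝓝 x, fderiv ℝ u y y = α • u y) (v : E) :
    H v x = (α - 1) • fderiv ℝ u x v := by
  have hlhs := hH.clm_apply (hasFDerivAt_id x)
  have hrhs := hu.hasFDerivAt.const_smul α
  have h := congrArg (· v) (hlhs.unique (hrhs.congr_of_eventuallyEq heuler))
  simp only [add_apply, smul_apply, ContinuousLinearMap.coe_comp, ContinuousLinearMap.coe_id',
    Function.comp_apply, id, ContinuousLinearMap.flip_apply] at h
  rw [sub_smul, one_smul, ← h]
  abel

theorem ContinuousLinearMap.apply_rotate_add_apply_rotate (T : (ℝ × ℝ) →L[ℝ] (ℝ × ℝ) →L[ℝ] F)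
    (θ : ℝ) :
    T (cos θ, sin θ) (cos θ, sin θ) + T (-sin θ, cos θ) (-sin θ, cos θ) =
      T (1, 0) (1, 0) + T (0, 1) (0, 1) := by
  have hcs : ((cos θ, sin θ) : ℝ × ℝ) = cos θ • (1, 0) + sin θ • (0, 1) := by simp
  have hsc : ((-sin θ, cos θ) : ℝ × ℝ) = (-sin θ) • (1, 0) + cos θ • (0, 1) := by simp
  rw [hcs, hsc]
  simp only [map_add, map_smul, add_apply, smul_apply]
  match_scalars
  · linear_combination sin_sq_add_cos_sq θ
  · ring
  · ring
  · linear_combination sin_sq_add_cos_sq θ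

theorem hasDerivAt_fderiv_apply_angular {u : ℝ × ℝ → F} {α θ : ℝ}
    (hu : ContDiffAt ℝ 2 u (cos θ, sin θ))
    (hlap : fderiv ℝ (fderiv ℝ u) (cos θ, sin θ) (1, 0) (1, 0) +
      fderiv ℝ (fderiv ℝ u) (cos θ, sin θ) (0, 1) (0, 1) = 0)
    (heuler : ∀ᶠ y in 𝓝 (cos θ, sin θ), fderiv ℝ u y y = α • u y) :
    HasDerivAt (fun t => fderiv ℝ u (cos t, sin t) (-sin t, cos t))
      (-(α ^ 2) • u (cos θ, sin θ)) θ := by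
  set p : ℝ × ℝ := (cos θ, sin θ)
  set H := fderiv ℝ (fderiv ℝ u) p
  have hdiff : DifferentiableAt ℝ u p := hu.differentiableAt (by norm_num)
  have hH : HasFDerivAt (fderiv ℝ u) H p :=
    ((hu.fderiv_right (m := 1) (by norm_num)).differentiableAt (by norm_num)).hasFDerivAt
  have hradial : H p p = (α - 1) • fderiv ℝ u p p :=
    fderiv_fderiv_apply_self_of_euler hdiff hH heuler p
  have htangential : H (-sin θ, cos θ) (-sin θ, cos θ) = -H p p := by
    rw [eq_neg_iff_add_eq_zero, add_comm, H.apply_rotate_add_apply_rotate, hlap]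
  have hpos : HasDerivAt (fun t => ((cos t, sin t) : ℝ × ℝ)) (-sin θ, cos θ) θ :=
    (hasDerivAt_cos θ).prodMk (hasDerivAt_sin θ)
  have hvel : HasDerivAt (fun t => ((-sin t, cos t) : ℝ × ℝ)) (-p) θ := by
    simpa [p] using (hasDerivAt_sin θ).neg.prodMk (hasDerivAt_cos θ)
  have hcurve : HasDerivAt (fun t => fderiv ℝ u (cos t, sin t))
      (H (-sin θ, cos θ)) θ := hH.comp_hasDerivAt θ hpos
  refine (hcurve.clm_apply hvel).congr_deriv ?_
  rw [htangential, hradial, map_neg, heuler.self_of_nhds]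
  module

end

theorem HarmonicOn.fderiv_fderiv_add_eq_zero {n : ℕ} {u : ℝ × ℝ → EuclideanSpace ℝ (Fin n)}
    {U : Set (ℝ × ℝ)} (h : HarmonicOn u U) (hU : IsOpen U) {x : ℝ × ℝ} (hx : x ∈ U) :
    fderiv ℝ (fderiv ℝ u) x (1, 0) (1, 0) + fderiv ℝ (fderiv ℝ u) x (0, 1) (0, 1) = 0 := by
  have hdiff : DifferentiableAt ℝ (fderiv ℝ u) x :=
    ((h.1.contDiffAt (hU.mem_nhds hx)).fderiv_right (m := 1) (by norm_num)).differentiableAt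
      (by norm_num)
  have hwithin (v w : ℝ × ℝ) :
      fderivWithin ℝ (fun y => fderivWithin ℝ u U y v) U x w = fderiv ℝ (fderiv ℝ u) x w v := by
    have heq : (fun y => fderivWithin ℝ u U y v) =ᶠ[𝓝 x] fun y => fderiv ℝ u y v :=
      eventually_of_mem (hU.mem_nhds hx) fun y hy =>
        DFunLike.congr_fun (fderivWithin_of_isOpen hU hy) v
    rw [fderivWithin_of_isOpen hU hx, heq.fderiv_eq,
      fderiv_clm_apply hdiff (differentiableAt_const v)]
    simp
  simpa only [hwithin] using h.2 x hx

theorem exists_polar_of_snd_nonneg {x : ℝ × ℝ} (hx : 0 ≤ x.2) :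
    ∃ r, 0 ≤ r ∧ ∃ θ ∈ Icc 0 π, (r * cos θ, r * sin θ) = x := by
  set z : ℂ := ⟨x.1, x.2⟩
  refine ⟨‖z‖, norm_nonneg z, z.arg, ⟨Complex.arg_nonneg_iff.2 hx, Complex.arg_le_pi z⟩, ?_⟩
  rw [Complex.norm_mul_cos_arg, Complex.norm_mul_sin_arg]

theorem exists_nat_eq_of_sin_mul_pi_eq_zero {α : ℝ} (hα : 0 < α) (h : sin (α * π) = 0) :
    ∃ l : ℕ, 0 < l ∧ α = l := by
  obtain ⟨k, hk⟩ := sin_eq_zero_iff.1 h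
  have hαk : α = k := (mul_right_cancel₀ pi_ne_zero hk).symm
  have hk0 : 0 < k := by exact_mod_cast hαk ▸ hα
  lift k to ℕ using hk0.le
  exact ⟨k, by exact_mod_cast hk0, by exact_mod_cast hαk⟩

theorem exists_eq_sin_smul_of_harmonic_homogeneous {n : ℕ} {α : ℝ} (hα : α ≠ 0)
    {u : ℝ × ℝ → EuclideanSpace ℝ (Fin n)}
    (hcont : ContinuousOn u {x : ℝ × ℝ | 0 ≤ x.2})
    (hharm : HarmonicOn u {x : ℝ × ℝ | 0 < x.2})
    (hbd : ∀ t : ℝ, u (t, 0) = 0)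
    (hhom : ∀ lam : ℝ, 0 < lam → ∀ x : ℝ × ℝ, 0 ≤ x.2 → u (lam • x) = lam ^ α • u x) :
    ∃ B, sin (α * π) • B = 0 ∧ ∀ θ ∈ Icc 0 π, u (cos θ, sin θ) = sin (α * θ) • B := by
  set U : Set (ℝ × ℝ) := {x | 0 < x.2}
  have hU : IsOpen U := isOpen_lt continuous_const continuous_snd
  have hC2 : ∀ x ∈ U, ContDiffAt ℝ 2 u x := fun x hx => hharm.1.contDiffAt (hU.mem_nhds hx)
  have heuler : ∀ x ∈ U, fderiv ℝ u x x = α • u x := fun x hx =>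
    ((hC2 x hx).differentiableAt (by norm_num)).hasFDerivAt.apply_self_eq_smul_of_homogeneous
      (eventually_of_mem (Ioi_mem_nhds one_pos) fun lam hlam => hhom lam hlam x (le_of_lt hx))
  have hcircle : ∀ θ ∈ Ioo 0 π, ((cos θ, sin θ) : ℝ × ℝ) ∈ U := fun θ hθ =>
    sin_pos_of_pos_of_lt_pi hθ.1 hθ.2
  obtain ⟨A, B, hAB⟩ := eq_cos_smul_add_sin_smul_of_hasDerivAt hα
    (g := fun θ => u (cos θ, sin θ)) (g' := fun θ => fderiv ℝ u (cos θ, sin θ) (-sin θ, cos θ))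
    (fun θ hθ => ((hC2 _ (hcircle θ hθ)).differentiableAt (by norm_num)).hasFDerivAt
      |>.comp_hasDerivAt θ ((hasDerivAt_cos θ).prodMk (hasDerivAt_sin θ)))
    (fun θ hθ => hasDerivAt_fderiv_apply_angular (hC2 _ (hcircle θ hθ))
      (hharm.fderiv_fderiv_add_eq_zero hU (hcircle θ hθ))
      (eventually_of_mem (hU.mem_nhds (hcircle θ hθ)) heuler))
  have hclosed : EqOn (fun θ => u (cos θ, sin θ)) (fun θ => cos (α * θ) • A + sin (α * θ) • B)
      (Icc 0 π) :=
    hAB.of_subset_closure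
      (hcont.comp (by fun_prop) fun θ hθ => sin_nonneg_of_nonneg_of_le_pi hθ.1 hθ.2)
      (by fun_prop) Ioo_subset_Icc_self (closure_Ioo pi_pos.ne).ge
  have hA : A = 0 := by
    simpa [hbd] using (hclosed ⟨le_rfl, pi_pos.le⟩).symm
  refine ⟨B, ?_, fun θ hθ => by simpa [hA] using hclosed hθ⟩
  simpa [hA, hbd] using (hclosed ⟨pi_pos.le, le_rfl⟩).symm

theorem statement8_general {n : ℕ} (α : ℝ) (hα : 0 < α)
    (u : ℝ × ℝ → EuclideanSpace ℝ (Fin n))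
    (hcont : ContinuousOn u {x : ℝ × ℝ | 0 ≤ x.2})
    (hharm : HarmonicOn u {x : ℝ × ℝ | 0 < x.2})
    (hbd : ∀ t : ℝ, u (t, 0) = 0)
    (hhom : ∀ lam : ℝ, 0 < lam → ∀ x : ℝ × ℝ, 0 ≤ x.2 → u (lam • x) = lam ^ α • u x)
    (hnz : ∃ x : ℝ × ℝ, 0 ≤ x.2 ∧ u x ≠ 0) :
    ∃ l : ℕ, 0 < l ∧ α = (l : ℝ) ∧
      ∃ c : EuclideanSpace ℝ (Fin n), c ≠ 0 ∧
        ∀ r : ℝ, 0 ≤ r → ∀ θ : ℝ, 0 ≤ θ → θ ≤ π →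
          u (r * Real.cos θ, r * Real.sin θ) = (r ^ l * Real.sin ((l : ℝ) * θ)) • c := by
  obtain ⟨B, hBπ, hB⟩ := exists_eq_sin_smul_of_harmonic_homogeneous hα.ne' hcont hharm hbd hhom
  have hpolar : ∀ r, 0 ≤ r → ∀ θ ∈ Icc 0 π,
      u (r * cos θ, r * sin θ) = (r ^ α * sin (α * θ)) • B := by
    intro r hr θ hθ
    rcases hr.eq_or_lt with rfl | hr
    · simpa [zero_rpow hα.ne'] using hbd 0
    · rw [mul_smul, ← hB θ hθ, ← hhom r hr _ (sin_nonneg_of_nonneg_of_le_pi hθ.1 hθ.2)]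
      rfl
  have hB0 : B ≠ 0 := by
    rintro rfl
    obtain ⟨x, hx2, hx⟩ := hnz
    obtain ⟨r, hr, θ, hθ, rfl⟩ := exists_polar_of_snd_nonneg hx2
    exact hx (by simpa using hpolar r hr θ hθ)
  obtain ⟨l, hl, rfl⟩ :=
    exists_nat_eq_of_sin_mul_pi_eq_zero hα ((smul_eq_zero.1 hBπ).resolve_right hB0)
  refine ⟨l, hl, rfl, B, hB0, fun r hr θ hθ0 hθπ => ?_⟩
  rw [hpolar r hr θ ⟨hθ0, hθπ⟩, rpow_natCast]

/-- A nontrivial continuous `α`-homogeneous function on the closed upper half-plane, harmonic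
in the open upper half-plane and vanishing on the boundary line, is of the form
`u(r cos θ, r sin θ) = c rˡ sin(lθ)` for a positive integer `l = α` and some `c ≠ 0`. -/
theorem statement8 {n : ℕ} (hn : 1 ≤ n) (α : ℝ) (hα : 0 < α)
    (u : ℝ × ℝ → EuclideanSpace ℝ (Fin n))
    (hcont : ContinuousOn u {x : ℝ × ℝ | 0 ≤ x.2})
    (hharm : HarmonicOn u {x : ℝ × ℝ | 0 < x.2})
    (hbd : ∀ t : ℝ, u (t, 0) = 0)
    (hhom : ∀ lam : ℝ, 0 < lam → ∀ x : ℝ × ℝ, 0 ≤ x.2 → u (lam • x) = lam ^ α • u x)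
    (hnz : ∃ x : ℝ × ℝ, 0 ≤ x.2 ∧ u x ≠ 0) :
    ∃ l : ℕ, 0 < l ∧ α = (l : ℝ) ∧
      ∃ c : EuclideanSpace ℝ (Fin n), c ≠ 0 ∧
        ∀ r : ℝ, 0 ≤ r → ∀ θ : ℝ, 0 ≤ θ → θ ≤ π →
          u (r * Real.cos θ, r * Real.sin θ) = (r ^ l * Real.sin ((l : ℝ) * θ)) • c :=
  statement8_general α hα u hcont hharm hbd hhom hnz
end

section
/- Let n ≥ 1, N ≥ 1 and c₁,…,c_N ∈ ℝⁿ. Define ζ : [0,2π] → ℝⁿ by ζ(θ) = Σ_{l=1}^N c_l sin(lθ/2) (so that ζ(0) = ζ(2π) = 0), and define ζ̄ : (0,1] × (0,2π) → ℝⁿ by ζ̄(r,θ) = Σ_{l=1}^N r^{l/2} c_l sin(lθ/2). Then the Dirichlet energy of ζ̄ computed in polar coordinates satisfies ∫₀^{2π} ∫₀^1 ( ‖∂_r ζ̄(r,θ)‖² + r^{−2} ‖∂_θ ζ̄(r,θ)‖² ) r dr dθ = (π/2) Σ_{l=1}^N l ‖c_l‖², while ∫₀^{2π} ‖ζ'(θ)‖²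 dθ = (π/4) Σ_{l=1}^N l² ‖c_l‖². In particular the Dirichlet energy of the extension ζ̄ is at most 2 ∫₀^{2π} ‖ζ'(θ)‖² dθ. -/
/-! In polar coordinates the energy density of `ζ̄` is the double sum over modes of
`(l m / 4) ⟪c_l, c_m⟫ cos((l - m)θ/2) r^((l+m)/2 - 1)`: the radial (sin · sin) and angular
(cos · cos) cross terms combine into a single cosine. Integrating in `r` produces the weights
`2 / (l + m)`, and integrating in `θ` kills every off-diagonal term, leaving
`2π · (l² / 4) / l · ‖c_l‖²` per mode. The boundary energy is computed the same way from the
orthogonality of the `cos(lθ/2)`, and the comparison is `l ≤ l²`. -/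

open Real intervalIntegral
open MeasureTheory (volume)

theorem integral_cos_intCast_mul_div_two (k : ℤ) :
    ∫ θ in (0:ℝ)..2 * π, cos (k * θ / 2) = if k = 0 then 2 * π else 0 := by
  split_ifs with hk
  · simp [hk]
  · have hk' : (k / 2 : ℝ) ≠ 0 := by simpa using hk
    simp_rw [mul_div_right_comm (k : ℝ)]
    rw [integral_comp_mul_left (fun x => cos x) hk', integral_cos,
      show (k : ℝ) / 2 * (2 * π) = k * π by ring]
    simp [sin_int_mul_pi]

theorem integral_cos_mul_cos_natCast_div_two {l m : ℕ} (hlm : l + m ≠ 0) :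
    ∫ θ in (0:ℝ)..2 * π, cos (l * θ / 2) * cos (m * θ / 2) = if l = m then π else 0 := by
  have hprod : ∀ θ : ℝ, cos (l * θ / 2) * cos (m * θ / 2)
      = (cos (((l - m : ℤ) : ℝ) * θ / 2) + cos (((l + m : ℤ) : ℝ) * θ / 2)) / 2 := fun θ => by
    push_cast
    rw [show ((l : ℝ) - m) * θ / 2 = l * θ / 2 - m * θ / 2 by ring,
      show ((l : ℝ) + m) * θ / 2 = l * θ / 2 + m * θ / 2 by ring, ← two_mul_cos_mul_cos]
    ring
  have hint : ∀ k : ℤ, IntervalIntegrable (fun θ : ℝ => cos (k * θ / 2)) volume 0 (2 * π) :=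
    fun k => (by fun_prop : Continuous _).intervalIntegrable _ _
  simp_rw [hprod]
  rw [integral_div, integral_add (hint _) (hint _), integral_cos_intCast_mul_div_two,
    integral_cos_intCast_mul_div_two]
  have hsum : (l + m : ℤ) ≠ 0 := by omega
  by_cases hl : l = m
  · simp [hl, show m ≠ 0 by omega]
  · have hdiff : (l - m : ℤ) ≠ 0 := by omega
    simp [hl, hsum, hdiff]

theorem integral_cos_sub_natCast_div_two (l m : ℕ) :
    ∫ θ in (0:ℝ)..2 * π, cos ((l - m) * θ / 2) = if l = m then 2 * π else 0 := by
  have h := integral_cos_intCast_mul_div_two (l - m)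
  push_cast at h
  rw [h]
  congr 1
  simp [sub_eq_zero]

section InnerProductSpace

variable {ι E : Type*} [NormedAddCommGroup E] [InnerProductSpace ℝ E]

theorem norm_sq_sum_smul (s : Finset ι) (a : ι → ℝ) (v : ι → E) :
    ‖∑ i ∈ s, a i • v i‖ ^ 2 = ∑ i ∈ s, ∑ j ∈ s, a i * a j * inner ℝ (v i) (v j) := by
  simp_rw [← real_inner_self_eq_norm_sq, sum_inner, inner_sum, real_inner_smul_left,
    real_inner_smul_right, mul_assoc]

theorem hasDerivAt_sum_smul_const {s : Finset ι} {f : ι → ℝ → ℝ} {f' : ι → ℝ} {x : ℝ}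
    (hf : ∀ i ∈ s, HasDerivAt (f i) (f' i) x) (v : ι → E) :
    HasDerivAt (fun t => ∑ i ∈ s, f i t • v i) (∑ i ∈ s, f' i • v i) x :=
  HasDerivAt.fun_sum fun i hi => (hf i hi).smul_const (v i)

end InnerProductSpace

theorem intervalIntegral.integral_finsetSum_finsetSum {ι : Type*} {s : Finset ι} {a b : ℝ}
    {f : ι → ι → ℝ → ℝ} (hf : ∀ i ∈ s, ∀ j ∈ s, IntervalIntegrable (f i j) volume a b) :
    ∫ x in a..b, ∑ i ∈ s, ∑ j ∈ s, f i j x = ∑ i ∈ s, ∑ j ∈ s, ∫ x in a..b, f i j x := by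
  have hrow : ∀ i ∈ s, IntervalIntegrable (fun x => ∑ j ∈ s, f i j x) volume a b :=
    fun i hi => by simpa only [Finset.sum_fn] using IntervalIntegrable.sum s (hf i hi)
  rw [integral_finsetSum hrow]
  exact Finset.sum_congr rfl fun i hi => integral_finsetSum (hf i hi)

theorem integral_sum_sum_mul_of_orthogonal {ι : Type*} [DecidableEq ι] {s : Finset ι}
    {a b A : ℝ} {K : ι → ι → ℝ → ℝ}
    (hK : ∀ i ∈ s, ∀ j ∈ s, IntervalIntegrable (K i j) volume a b)
    (horth : ∀ i ∈ s, ∀ j ∈ s, ∫ x in a..b, K i j x = if i = j then A else 0) (w : ι → ι → ℝ) :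
    ∫ x in a..b, ∑ i ∈ s, ∑ j ∈ s, w i j * K i j x = A * ∑ i ∈ s, w i i := by
  rw [integral_finsetSum_finsetSum fun i hi j hj => (hK i hi j hj).const_mul (w i j),
    Finset.mul_sum]
  refine Finset.sum_congr rfl fun i hi => ?_
  simp_rw [integral_const_mul]
  rw [Finset.sum_congr rfl fun j hj => by rw [horth i hi j hj]]
  simp [hi, mul_comm]

theorem hasDerivAt_sin_mul_div_two (a x : ℝ) :
    HasDerivAt (fun t => sin (a * t / 2)) (a / 2 * cos (a * x / 2)) x := by
  have h := ((hasDerivAt_id x).const_mul a).div_const 2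
  simpa [mul_comm] using h.sin

theorem integral_zero_one_rpow_sub_one {a : ℝ} (ha : 0 < a) :
    ∫ r in (0:ℝ)..1, r ^ (a - 1) = 1 / a := by
  rw [integral_rpow (Or.inl (by linarith)), sub_add_cancel, one_rpow, zero_rpow ha.ne']
  ring

section HalfModes

variable {E : Type*} [NormedAddCommGroup E] [InnerProductSpace ℝ E] (s : Finset ℕ) (c : ℕ → E)

theorem integral_norm_sq_deriv_sum_sin_smul (hs : 0 ∉ s) :
    ∫ θ in (0:ℝ)..2 * π, ‖deriv (fun t => ∑ l ∈ s, sin (l * t / 2) • c l) θ‖ ^ 2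
      = π / 4 * ∑ l ∈ s, (l : ℝ) ^ 2 * ‖c l‖ ^ 2 := by
  have hderiv : ∀ θ, deriv (fun t => ∑ l ∈ s, sin (l * t / 2) • c l) θ
      = ∑ l ∈ s, ((l : ℝ) / 2 * cos (l * θ / 2)) • c l := fun θ =>
    (hasDerivAt_sum_smul_const (s := s) (fun l _ => hasDerivAt_sin_mul_div_two (l : ℝ) θ) c).deriv
  have hexpand : ∀ θ, ‖deriv (fun t => ∑ l ∈ s, sin (l * t / 2) • c l) θ‖ ^ 2
      = ∑ l ∈ s, ∑ m ∈ s, ((l : ℝ) / 2 * (m / 2) * inner ℝ (c l) (c m))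
          * (cos (l * θ / 2) * cos (m * θ / 2)) := fun θ => by
    rw [hderiv, norm_sq_sum_smul]
    exact Finset.sum_congr rfl fun l _ => Finset.sum_congr rfl fun m _ => by ring
  simp_rw [hexpand]
  rw [integral_sum_sum_mul_of_orthogonal
    (K := fun (l m : ℕ) θ => cos (l * θ / 2) * cos (m * θ / 2))
    (fun l _ m _ => (by fun_prop : Continuous _).intervalIntegrable _ _)
    (fun l _ m _ => integral_cos_mul_cos_natCast_div_two (by grind)),
    Finset.mul_sum, Finset.mul_sum]
  refine Finset.sum_congr rfl fun l _ => ?_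
  rw [real_inner_self_eq_norm_sq]
  ring

noncomputable def halfModeExtension (r θ : ℝ) : E :=
  ∑ l ∈ s, (r ^ ((l : ℝ) / 2) * sin (l * θ / 2)) • c l

theorem deriv_halfModeExtension_radial {r : ℝ} (hr : r ≠ 0) (θ : ℝ) :
    deriv (fun ρ => halfModeExtension s c ρ θ) r
      = ∑ l ∈ s, ((l : ℝ) / 2 * r ^ ((l : ℝ) / 2 - 1) * sin (l * θ / 2)) • c l :=
  (hasDerivAt_sum_smul_const (s := s)
    (fun l _ => (hasDerivAt_rpow_const (p := (l : ℝ) / 2) (Or.inl hr)).mul_const _) c).deriv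

theorem deriv_halfModeExtension_angular (r θ : ℝ) :
    deriv (halfModeExtension s c r) θ
      = ∑ l ∈ s, (r ^ ((l : ℝ) / 2) * ((l : ℝ) / 2 * cos (l * θ / 2))) • c l :=
  (hasDerivAt_sum_smul_const (s := s)
    (fun l _ => (hasDerivAt_sin_mul_div_two (l : ℝ) θ).const_mul _) c).deriv

theorem energy_density_halfModeExtension {r : ℝ} (hr : 0 < r) (θ : ℝ) :
    (‖deriv (fun ρ => halfModeExtension s c ρ θ) r‖ ^ 2
        + (r ^ 2)⁻¹ * ‖deriv (halfModeExtension s c r) θ‖ ^ 2) * r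
      = ∑ l ∈ s, ∑ m ∈ s, ((l : ℝ) * m / 4 * inner ℝ (c l) (c m) * cos ((l - m) * θ / 2))
          * r ^ (((l : ℝ) + m) / 2 - 1) := by
  rw [deriv_halfModeExtension_radial s c hr.ne', deriv_halfModeExtension_angular,
    norm_sq_sum_smul, norm_sq_sum_smul, Finset.mul_sum, ← Finset.sum_add_distrib, Finset.sum_mul]
  refine Finset.sum_congr rfl fun l _ => ?_
  rw [Finset.mul_sum, ← Finset.sum_add_distrib, Finset.sum_mul]
  refine Finset.sum_congr rfl fun m _ => ?_
  rw [rpow_sub_one hr.ne', rpow_sub_one hr.ne', rpow_sub_one hr.ne', add_div, rpow_add hr,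
    show ((l : ℝ) - m) * θ / 2 = l * θ / 2 - m * θ / 2 by ring, cos_sub]
  field_simp
  ring

theorem integral_energy_density_halfModeExtension_radial (hs : 0 ∉ s) (θ : ℝ) :
    ∫ r in (0:ℝ)..1, (‖deriv (fun ρ => halfModeExtension s c ρ θ) r‖ ^ 2
        + (r ^ 2)⁻¹ * ‖deriv (halfModeExtension s c r) θ‖ ^ 2) * r
      = ∑ l ∈ s, ∑ m ∈ s, ((l : ℝ) * m / 4 * inner ℝ (c l) (c m) / ((l + m) / 2))
          * cos ((l - m) * θ / 2) := by
  have hpos : ∀ l ∈ s, ∀ m ∈ s, (0 : ℝ) < ((l : ℝ) + m) / 2 := fun l hl m _ => by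
    have : l ≠ 0 := fun h => hs (h ▸ hl)
    positivity
  rw [integral_congr_ae (Filter.Eventually.of_forall fun r hr =>
      energy_density_halfModeExtension s c (r := r) (by simp_all) θ),
    integral_finsetSum_finsetSum fun l hl m hm =>
      (intervalIntegrable_rpow' (by linarith [hpos l hl m hm])).const_mul _]
  refine Finset.sum_congr rfl fun l hl => Finset.sum_congr rfl fun m hm => ?_
  rw [integral_const_mul, integral_zero_one_rpow_sub_one (hpos l hl m hm)]
  ring

theorem dirichlet_energy_halfModeExtension (hs : 0 ∉ s) :
    ∫ θ in (0:ℝ)..2 * π, ∫ r in (0:ℝ)..1, (‖deriv (fun ρ => halfModeExtension s c ρ θ) r‖ ^ 2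
        + (r ^ 2)⁻¹ * ‖deriv (halfModeExtension s c r) θ‖ ^ 2) * r
      = π / 2 * ∑ l ∈ s, (l : ℝ) * ‖c l‖ ^ 2 := by
  simp_rw [integral_energy_density_halfModeExtension_radial s c hs]
  rw [integral_sum_sum_mul_of_orthogonal
    (K := fun (l m : ℕ) θ => cos ((l - m) * θ / 2))
    (fun l _ m _ => (by fun_prop : Continuous _).intervalIntegrable _ _)
    (fun l _ m _ => integral_cos_sub_natCast_div_two l m), Finset.mul_sum, Finset.mul_sum]
  refine Finset.sum_congr rfl fun l hl => ?_
  have : (l : ℝ) ≠ 0 := Nat.cast_ne_zero.mpr fun h => hs (h ▸ hl)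
  rw [real_inner_self_eq_norm_sq]
  field_simp
  ring

end HalfModes

theorem statement10_general {n : ℕ} (N : ℕ)
    (c : ℕ → EuclideanSpace ℝ (Fin n))
    (ζ : ℝ → EuclideanSpace ℝ (Fin n))
    (hζ : ∀ θ : ℝ, ζ θ = ∑ l ∈ Finset.Icc 1 N, Real.sin ((l : ℝ) * θ / 2) • c l)
    (zbar : ℝ → ℝ → EuclideanSpace ℝ (Fin n))
    (hzbar : ∀ r θ : ℝ, zbar r θ =
      ∑ l ∈ Finset.Icc 1 N, (r ^ ((l : ℝ) / 2) * Real.sin ((l : ℝ) * θ / 2)) • c l) :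
    (∫ θ in (0:ℝ)..(2 * π), ∫ r in (0:ℝ)..1,
        (‖deriv (fun s => zbar s θ) r‖ ^ 2 + (r ^ 2)⁻¹ * ‖deriv (fun t => zbar r t) θ‖ ^ 2) * r)
      = π / 2 * ∑ l ∈ Finset.Icc 1 N, (l : ℝ) * ‖c l‖ ^ 2 ∧
    (∫ θ in (0:ℝ)..(2 * π), ‖deriv ζ θ‖ ^ 2)
      = π / 4 * ∑ l ∈ Finset.Icc 1 N, (l : ℝ) ^ 2 * ‖c l‖ ^ 2 ∧
    (∫ θ in (0:ℝ)..(2 * π), ∫ r in (0:ℝ)..1,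
        (‖deriv (fun s => zbar s θ) r‖ ^ 2 + (r ^ 2)⁻¹ * ‖deriv (fun t => zbar r t) θ‖ ^ 2) * r)
      ≤ 2 * ∫ θ in (0:ℝ)..(2 * π), ‖deriv ζ θ‖ ^ 2 := by
  have hs : 0 ∉ Finset.Icc 1 N := by simp
  obtain rfl : zbar = halfModeExtension (Finset.Icc 1 N) c := funext₂ hzbar
  obtain rfl : ζ = fun θ => ∑ l ∈ Finset.Icc 1 N, sin ((l : ℝ) * θ / 2) • c l := funext hζ
  have henergy := dirichlet_energy_halfModeExtension _ c hs
  have hboundary := integral_norm_sq_deriv_sum_sin_smul _ c hs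
  refine ⟨henergy, hboundary, ?_⟩
  rw [henergy, hboundary, ← mul_assoc, show 2 * (π / 4) = π / 2 by ring]
  gcongr with l hl
  exact le_self_pow₀ (by exact_mod_cast (Finset.mem_Icc.mp hl).1) two_ne_zero

/-- Energy of the half-integer-mode extension to the slit disk: for
`ζ(θ) = Σ_{l=1}^N c_l sin(lθ/2)` and `ζ̄(r,θ) = Σ_{l=1}^N r^{l/2} c_l sin(lθ/2)`, the Dirichlet
energy of `ζ̄` in polar coordinates equals `(π/2) Σ l ‖c_l‖²`, while
`∫₀^{2π} ‖ζ'‖² = (π/4) Σ l² ‖c_l‖²`; in particular the energy of `ζ̄` is at most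
`2 ∫₀^{2π} ‖ζ'‖²`. -/
theorem statement10 {n : ℕ} (hn : 1 ≤ n) (N : ℕ) (hN : 1 ≤ N)
    (c : ℕ → EuclideanSpace ℝ (Fin n))
    (ζ : ℝ → EuclideanSpace ℝ (Fin n))
    (hζ : ∀ θ : ℝ, ζ θ = ∑ l ∈ Finset.Icc 1 N, Real.sin ((l : ℝ) * θ / 2) • c l)
    (zbar : ℝ → ℝ → EuclideanSpace ℝ (Fin n))
    (hzbar : ∀ r θ : ℝ, zbar r θ =
      ∑ l ∈ Finset.Icc 1 N, (r ^ ((l : ℝ) / 2) * Real.sin ((l : ℝ) * θ / 2)) • c l) :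
    (∫ θ in (0:ℝ)..(2 * π), ∫ r in (0:ℝ)..1,
        (‖deriv (fun s => zbar s θ) r‖ ^ 2 + (r ^ 2)⁻¹ * ‖deriv (fun t => zbar r t) θ‖ ^ 2) * r)
      = π / 2 * ∑ l ∈ Finset.Icc 1 N, (l : ℝ) * ‖c l‖ ^ 2 ∧
    (∫ θ in (0:ℝ)..(2 * π), ‖deriv ζ θ‖ ^ 2)
      = π / 4 * ∑ l ∈ Finset.Icc 1 N, (l : ℝ) ^ 2 * ‖c l‖ ^ 2 ∧
    (∫ θ in (0:ℝ)..(2 * π), ∫ r in (0:ℝ)..1,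
        (‖deriv (fun s => zbar s θ) r‖ ^ 2 + (r ^ 2)⁻¹ * ‖deriv (fun t => zbar r t) θ‖ ^ 2) * r)
      ≤ 2 * ∫ θ in (0:ℝ)..(2 * π), ‖deriv ζ θ‖ ^ 2 :=
  statement10_general N c ζ hζ zbar hzbar
end

section
/- Let α ∈ ℝ, β > 0, R > 0, and let I : (0,R) → ℝ be nondecreasing, locally absolutely continuous, with lim_{r→0+} I(r) = α, and satisfying the differential inequality I'(r) ≥ (2/r)·(α + β − I(r))·(I(r) − α) for almost every r ∈ (0,R). Then there exist r₀ ∈ (0,R) and a constant C > 0 such that 0 ≤ I(r) − α ≤ C r^β for all r ∈ (0, r₀]; more precisely, choosing r₀ so that I(r₀) ≤ α + β/2, one has I(r) − α ≤ (r/r₀)^β (I(r₀) − α) for all r ∈ (0, r₀]. -/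
open MeasureTheory Filter

/-- The key Gronwall-type estimate. -/
lemma statement11_key (α β R : ℝ) (hβ : 0 < β) (hR : 0 < R)
    (I I' : ℝ → ℝ)
    (hmono : MonotoneOn I (Set.Ioo 0 R))
    (hFTC : ∀ s t : ℝ, s ∈ Set.Ioo (0:ℝ) R → t ∈ Set.Ioo (0:ℝ) R → s ≤ t →
      I t - I s = ∫ r in s..t, I' r)
    (hlim : Tendsto I (nhdsWithin 0 (Set.Ioi 0)) (nhds α))
    (hODE : ∀ᵐ r ∂volume, r ∈ Set.Ioo (0:ℝ) R →
      (2 / r) * (α + β - I r) * (I r - α) ≤ I' r) :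
    ∀ r₀ ∈ Set.Ioo (0:ℝ) R, I r₀ ≤ α + β / 2 →
      ∀ r ∈ Set.Ioc (0:ℝ) r₀, I r - α ≤ (r / r₀) ^ β * (I r₀ - α) := by
  -- α is a lower bound for I on (0, R)
  have hge : ∀ u ∈ Set.Ioo (0:ℝ) R, α ≤ I u := by
    intro u hu
    refine le_of_tendsto hlim ?_
    filter_upwards [Ioo_mem_nhdsGT_of_mem (Set.left_mem_Ico.2 hu.1)] with s hs
    exact hmono ⟨hs.1, hs.2.trans hu.2⟩ hu hs.2.le
  rintro r₀ hr₀ hIr₀ r ⟨hr0, hrr₀⟩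
  have hr₀0 : (0:ℝ) < r₀ := hr₀.1
  have hrR : r < R := lt_of_le_of_lt hrr₀ hr₀.2
  have hrmem : r ∈ Set.Ioo (0:ℝ) R := ⟨hr0, hrR⟩
  rcases eq_or_lt_of_le hrr₀ with heq | hlt
  · subst heq
    rw [div_self (ne_of_gt hr0), Real.one_rpow, one_mul]
  -- now r < r₀
  by_cases hint : IntervalIntegrable I' volume r r₀
  · -- main case
    have subII : ∀ s t : ℝ, r ≤ s → t ≤ r₀ → s ≤ t → IntervalIntegrable I' volume s t := by
      intro s t h1 h2 h3
      refine hint.mono_set ?_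
      rw [Set.uIcc_of_le h3, Set.uIcc_of_le hrr₀]
      exact Set.Icc_subset_Icc h1 h2
    -- the one-step Gronwall estimate
    have step : ∀ s t : ℝ, r ≤ s → s ≤ t → t ≤ r₀ →
        (I s - α) * (1 + β * Real.log (t / s)) ≤ I t - α := by
      intro s t hrs hst htr₀
      have hs0 : (0:ℝ) < s := lt_of_lt_of_le hr0 hrs
      have ht0 : (0:ℝ) < t := lt_of_lt_of_le hs0 hst
      have hsmem : s ∈ Set.Ioo (0:ℝ) R := ⟨hs0, lt_of_le_of_lt (hst.trans htr₀) hr₀.2⟩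
      have htmem : t ∈ Set.Ioo (0:ℝ) R := ⟨ht0, lt_of_le_of_lt htr₀ hr₀.2⟩
      have hJs : 0 ≤ I s - α := sub_nonneg.2 (hge s hsmem)
      set c : ℝ := β * (I s - α) with hc
      have hc0 : 0 ≤ c := mul_nonneg hβ.le hJs
      -- integrability
      have hint' : IntervalIntegrable I' volume s t := subII s t hrs htr₀ hst
      have hcont : IntervalIntegrable (fun u : ℝ => c * u⁻¹) volume s t := by
        apply ContinuousOn.intervalIntegrable
        refine continuousOn_const.mul (ContinuousOn.inv₀ continuousOn_id ?_)
        intro x hx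
        rw [Set.uIcc_of_le hst] at hx
        exact ne_of_gt (lt_of_lt_of_le hs0 hx.1)
      -- a.e. comparison
      have hae : (fun u : ℝ => c * u⁻¹) ≤ᵐ[volume.restrict (Set.Icc s t)] I' := by
        rw [EventuallyLE, ae_restrict_iff' measurableSet_Icc]
        filter_upwards [hODE] with u hu humem
        have hu0 : (0:ℝ) < u := lt_of_lt_of_le hs0 humem.1
        have huR : u ∈ Set.Ioo (0:ℝ) R :=
          ⟨hu0, lt_of_le_of_lt (humem.2.trans htr₀) hr₀.2⟩
        have h1 : I s ≤ I u := hmono hsmem huR humem.1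
        have h2 : I u ≤ I r₀ := hmono huR hr₀ (humem.2.trans htr₀)
        have h3 : α ≤ I s := hge s hsmem
        have key : c ≤ 2 * (α + β - I u) * (I u - α) := by nlinarith
        have h4 : c * u⁻¹ ≤ 2 * (α + β - I u) * (I u - α) * u⁻¹ :=
          mul_le_mul_of_nonneg_right key (inv_nonneg.2 hu0.le)
        have heq : 2 * (α + β - I u) * (I u - α) * u⁻¹
            = 2 / u * (α + β - I u) * (I u - α) := by
          field_simp
        rw [heq] at h4
        exact h4.trans (hu huR)
      have hmono' : c * Real.log (t / s) ≤ I t - I s := by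
        have h0 : (0:ℝ) ∉ Set.uIcc s t := by
          rw [Set.uIcc_of_le hst]
          intro h
          exact absurd h.1 (not_le.2 hs0)
        have := intervalIntegral.integral_mono_ae_restrict hst hcont hint' hae
        rw [intervalIntegral.integral_const_mul, integral_inv h0] at this
        rw [← hFTC s t hsmem htmem hst] at this
        exact this
      have : I s - α + c * Real.log (t / s) ≤ I t - α := by linarith
      calc (I s - α) * (1 + β * Real.log (t / s))
          = I s - α + c * Real.log (t / s) + (I s - α - (I s - α)) * (β * Real.log (t/s)) := by
            rw [hc]; ring
        _ = I s - α + c * Real.log (t / s) := by ring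
        _ ≤ I t - α := this
    -- the chain estimate
    set L : ℝ := Real.log (r₀ / r) with hLdef
    have hL : 0 < L := Real.log_pos (by rw [lt_div_iff₀ hr0]; linarith)
    have hchain : ∀ n : ℕ, 1 ≤ n → (I r - α) * (1 + β * L / n) ^ n ≤ I r₀ - α := by
      intro n hn
      have hn0 : (0:ℝ) < n := by exact_mod_cast hn
      set δ : ℝ := L / n with hδdef
      have hδ0 : 0 < δ := div_pos hL hn0
      set f : ℕ → ℝ := fun k => r * Real.exp (k * δ) with hfdef
      have hf0 : f 0 = r := by simp [hfdef]
      have hfn : f n = r₀ := by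
        have : (n : ℝ) * δ = L := by
          rw [hδdef]; field_simp
        rw [hfdef]
        simp only [this, hLdef]
        rw [Real.exp_log (div_pos hr₀0 hr0)]
        field_simp
      have hfmono : ∀ k m : ℕ, k ≤ m → f k ≤ f m := by
        intro k m hkm
        have : (k : ℝ) * δ ≤ (m : ℝ) * δ :=
          mul_le_mul_of_nonneg_right (by exact_mod_cast hkm) hδ0.le
        exact mul_le_mul_of_nonneg_left (Real.exp_le_exp.2 this) hr0.le
      have hfr : ∀ k : ℕ, r ≤ f k := by
        intro k
        have := hfmono 0 k (Nat.zero_le k)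
        rwa [hf0] at this
      have hfr₀ : ∀ k : ℕ, k ≤ n → f k ≤ r₀ := by
        intro k hk
        have := hfmono k n hk
        rwa [hfn] at this
      have hJr : 0 ≤ I r - α := sub_nonneg.2 (hge r hrmem)
      have hratio : ∀ k : ℕ, Real.log (f (k+1) / f k) = δ := by
        intro k
        have hfk : (0:ℝ) < f k := lt_of_lt_of_le hr0 (hfr k)
        rw [hfdef]
        have : r * Real.exp ((↑(k+1)) * δ) / (r * Real.exp (k * δ))
            = Real.exp ((↑(k+1)) * δ - k * δ) := by
          rw [Real.exp_sub]
          field_simp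
        simp only [this]
        rw [Real.log_exp]
        push_cast
        ring
      have key : ∀ k : ℕ, k ≤ n → (I r - α) * (1 + β * δ) ^ k ≤ I (f k) - α := by
        intro k
        induction k with
        | zero => intro _; simp [hf0]
        | succ k ih =>
          intro hk1
          have hk : k ≤ n := Nat.le_of_succ_le hk1
          have h1 := step (f k) (f (k+1)) (hfr k) (hfmono k (k+1) (Nat.le_succ k))
            (hfr₀ (k+1) hk1)
          rw [hratio k] at h1
          have hδpos : (0:ℝ) < 1 + β * δ := by positivity
          have h2 : (I r - α) * (1 + β * δ) ^ k * (1 + β * δ)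
              ≤ (I (f k) - α) * (1 + β * δ) :=
            mul_le_mul_of_nonneg_right (ih hk) hδpos.le
          calc (I r - α) * (1 + β * δ) ^ (k+1)
              = (I r - α) * (1 + β * δ) ^ k * (1 + β * δ) := by ring
            _ ≤ (I (f k) - α) * (1 + β * δ) := h2
            _ ≤ I (f (k+1)) - α := h1
      have := key n le_rfl
      rw [hfn] at this
      have hδeq : β * δ = β * L / n := by rw [hδdef]; ring
      rw [← hδeq]
      exact this
    -- take the limit n → ∞
    have hlimit : Tendsto (fun n : ℕ => (I r - α) * (1 + β * L / n) ^ n) atTop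
        (nhds ((I r - α) * Real.exp (β * L))) := by
      have := Real.tendsto_one_add_div_pow_exp (β * L)
      exact this.const_mul (I r - α)
    have hfinal : (I r - α) * Real.exp (β * L) ≤ I r₀ - α := by
      refine le_of_tendsto hlimit ?_
      filter_upwards [eventually_ge_atTop 1] with n hn
      exact hchain n hn
    have hexp : Real.exp (β * L) = (r₀ / r) ^ β := by
      rw [Real.rpow_def_of_pos (div_pos hr₀0 hr0), hLdef, mul_comm]
    rw [hexp] at hfinal
    -- rearrange
    have hrpos : (0:ℝ) < (r / r₀) ^ β := Real.rpow_pos_of_pos (div_pos hr0 hr₀0) β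
    have hmul : (r₀ / r) ^ β * (r / r₀) ^ β = 1 := by
      rw [← Real.mul_rpow (div_pos hr₀0 hr0).le (div_pos hr0 hr₀0).le]
      rw [div_mul_div_comm, mul_comm r₀ r, div_self (by positivity), Real.one_rpow]
    have := mul_le_mul_of_nonneg_right hfinal hrpos.le
    calc I r - α = (I r - α) * ((r₀ / r) ^ β * (r / r₀) ^ β) := by rw [hmul, mul_one]
      _ = (I r - α) * (r₀ / r) ^ β * (r / r₀) ^ β := by ring
      _ ≤ (I r₀ - α) * (r / r₀) ^ β := this
      _ = (r / r₀) ^ β * (I r₀ - α) := by ring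
  · -- non-integrable case : I r₀ = α and everything is trivial
    have hconst : ∀ s' ∈ Set.Ioo (0:ℝ) r, I s' = I r₀ := by
      intro s' hs'
      have hs'mem : s' ∈ Set.Ioo (0:ℝ) R := ⟨hs'.1, hs'.2.trans hrR⟩
      have hni : ¬ IntervalIntegrable I' volume s' r₀ := by
        intro h
        refine hint (h.mono_set ?_)
        rw [Set.uIcc_of_le hrr₀, Set.uIcc_of_le (hs'.2.le.trans hrr₀)]
        exact Set.Icc_subset_Icc hs'.2.le le_rfl
      have := hFTC s' r₀ hs'mem hr₀ (hs'.2.le.trans hrr₀)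
      rw [intervalIntegral.integral_undef hni] at this
      linarith
    have hIr₀α : α = I r₀ := by
      refine tendsto_nhds_unique hlim ?_
      refine tendsto_const_nhds.congr' ?_
      filter_upwards [Ioo_mem_nhdsGT_of_mem (Set.left_mem_Ico.2 hr0)] with s hs
      exact (hconst s hs).symm
    have h1 : I r ≤ I r₀ := hmono hrmem hr₀ hrr₀
    have h2 : α ≤ I r := hge r hrmem
    have h3 : I r - α = 0 := by linarith [hIr₀α]
    have h4 : I r₀ - α = 0 := by linarith [hIr₀α]
    rw [h3, h4, mul_zero]

/-- Gronwall-type decay of the frequency function: if `I` is nondecreasing, locally absolutely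
continuous on `(0,R)` with `lim_{r→0+} I(r) = α`, and satisfies
`I'(r) ≥ (2/r)(α + β − I(r))(I(r) − α)` a.e., then `0 ≤ I(r) − α ≤ C r^β` for small `r`;
more precisely, if `I(r₀) ≤ α + β/2` then `I(r) − α ≤ (r/r₀)^β (I(r₀) − α)` on `(0, r₀]`. -/
theorem statement11 (α β R : ℝ) (hβ : 0 < β) (hR : 0 < R)
    (I I' : ℝ → ℝ)
    (hmono : MonotoneOn I (Set.Ioo 0 R))
    (hFTC : ∀ s t : ℝ, s ∈ Set.Ioo (0:ℝ) R → t ∈ Set.Ioo (0:ℝ) R → s ≤ t →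
      I t - I s = ∫ r in s..t, I' r)
    (hlim : Tendsto I (nhdsWithin 0 (Set.Ioi 0)) (nhds α))
    (hODE : ∀ᵐ r ∂volume, r ∈ Set.Ioo (0:ℝ) R →
      (2 / r) * (α + β - I r) * (I r - α) ≤ I' r) :
    (∃ r₀ ∈ Set.Ioo (0:ℝ) R, ∃ C : ℝ, 0 < C ∧
      ∀ r ∈ Set.Ioc (0:ℝ) r₀, 0 ≤ I r - α ∧ I r - α ≤ C * r ^ β) ∧
    (∀ r₀ ∈ Set.Ioo (0:ℝ) R, I r₀ ≤ α + β / 2 →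
      ∀ r ∈ Set.Ioc (0:ℝ) r₀, I r - α ≤ (r / r₀) ^ β * (I r₀ - α)) := by
  have key := statement11_key α β R hβ hR I I' hmono hFTC hlim hODE
  have hge : ∀ u ∈ Set.Ioo (0:ℝ) R, α ≤ I u := by
    intro u hu
    refine le_of_tendsto hlim ?_
    filter_upwards [Ioo_mem_nhdsGT_of_mem (Set.left_mem_Ico.2 hu.1)] with s hs
    exact hmono ⟨hs.1, hs.2.trans hu.2⟩ hu hs.2.le
  constructor
  · -- existence of r₀ and C
    have hev : ∀ᶠ x in nhdsWithin 0 (Set.Ioi (0:ℝ)), I x < α + β / 2 :=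
      hlim.eventually (eventually_lt_nhds (by linarith))
    have hev2 : ∀ᶠ x in nhdsWithin 0 (Set.Ioi (0:ℝ)), x ∈ Set.Ioo (0:ℝ) R :=
      Ioo_mem_nhdsGT_of_mem (Set.left_mem_Ico.2 hR)
    obtain ⟨r₀, h1, h2⟩ := (hev.and hev2).exists
    refine ⟨r₀, h2, (I r₀ - α) / r₀ ^ β + 1, ?_, ?_⟩
    · have : 0 ≤ (I r₀ - α) / r₀ ^ β :=
        div_nonneg (sub_nonneg.2 (hge r₀ h2)) (Real.rpow_pos_of_pos h2.1 β).le
      linarith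
    · intro r hr
      have hrmem : r ∈ Set.Ioo (0:ℝ) R := ⟨hr.1, lt_of_le_of_lt hr.2 h2.2⟩
      refine ⟨sub_nonneg.2 (hge r hrmem), ?_⟩
      have hk := key r₀ h2 h1.le r hr
      have heq : (r / r₀) ^ β * (I r₀ - α) = (I r₀ - α) / r₀ ^ β * r ^ β := by
        rw [Real.div_rpow hr.1.le h2.1.le]
        ring
      rw [heq] at hk
      refine hk.trans ?_
      have hrp : (0:ℝ) ≤ r ^ β := (Real.rpow_pos_of_pos hr.1 β).le
      have : (I r₀ - α) / r₀ ^ β ≤ (I r₀ - α) / r₀ ^ β + 1 := by linarith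
      exact mul_le_mul_of_nonneg_right this hrp
  · exact key
end

section
/- Let n ≥ 1, let H := {(x₁,x₂) ∈ ℝ² : x₂ < 0} be the open lower half-plane, let p ∈ ℝ×{0} be a point on its boundary line, let 0 < ε < η, and let A := {x ∈ H : ε < |x − p| < η} be the open half-annulus. Let f : A → ℝⁿ be continuously differentiable and δ > 0, and suppose that for every ρ ∈ (ε, η) there exist points x_ρ, y_ρ ∈ H with |x_ρ − p| = |y_ρ − p| = ρ and ‖f(x_ρ) − f(y_ρ)‖ ≥ δ. Then ∬_A ‖Df(x)‖² dx ≥ (δ²/π) · log(η/ε). In particular, if f is continuously differentiable on {x ∈ H : 0 < |x − p| < η} and the oscillation hypothesis holds for every ρ ∈ (0, η), then the Dirichlet energy of f on that punctured half-disk is infinite. -/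
open MeasureTheory

/-- Euclidean distance from `x` to `p` in the plane `ℝ × ℝ`. -/
noncomputable def rad (p x : ℝ × ℝ) : ℝ :=
  Real.sqrt ((x.1 - p.1) ^ 2 + (x.2 - p.2) ^ 2)

/-!
Courant–Lebesgue argument. In polar coordinates `(ρ, θ)` about `p` the half-annulus is
`(ε, η) × (-π, 0)` with area element `ρ dρ dθ`. On the half-circle of radius `ρ` the two points
where `f` oscillates by `δ` are joined by an arc of angle at most `π`, along which the
fundamental theorem of calculus and Cauchy–Schwarz give `δ² ≤ π ρ² ∫ ‖Df‖² dθ`. Hence the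
energy on that circle, `∫ ‖Df‖² ρ dθ`, is at least `δ² / (π ρ)`, and integrating over
`ρ ∈ (ε, η)` yields `(δ² / π) log (η / ε)`, which is unbounded as `ε → 0`.
-/

open Real Set

def halfAnnulus (p : ℝ × ℝ) (ε η : ℝ) : Set (ℝ × ℝ) :=
  {x | x.2 < 0 ∧ ε < rad p x ∧ rad p x < η}

lemma continuous_rad (p : ℝ × ℝ) : Continuous (rad p) := by
  unfold rad; fun_prop

lemma isOpen_halfAnnulus (p : ℝ × ℝ) (ε η : ℝ) : IsOpen (halfAnnulus p ε η) :=
  (isOpen_lt continuous_snd continuous_const).inter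
    ((isOpen_lt continuous_const (continuous_rad p)).inter
      (isOpen_lt (continuous_rad p) continuous_const))

lemma rad_add_polarCoord_symm (p : ℝ × ℝ) {r : ℝ} (hr : 0 ≤ r) (θ : ℝ) :
    rad p (p + polarCoord.symm (r, θ)) = r := by
  have h : (r * cos θ) ^ 2 + (r * sin θ) ^ 2 = r ^ 2 := by
    linear_combination r ^ 2 * cos_sq_add_sin_sq θ
  simp [rad, h, sqrt_sq hr]

lemma exists_angle_add_polarCoord_symm {p z : ℝ × ℝ} (hp : p.2 = 0) (hz : z.2 < 0) :
    ∃ θ ∈ Ioo (-π) 0, p + polarCoord.symm (rad p z, θ) = z := by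
  have hz' : (z - p).2 < 0 := by simpa [hp] using hz
  have hsrc : z - p ∈ polarCoord.source := Or.inr hz'.ne
  refine ⟨(polarCoord (z - p)).2, ⟨Complex.neg_pi_lt_arg _, ?_⟩, ?_⟩
  · exact Complex.arg_neg_iff.2 (by simpa using hz')
  · have hfst : (polarCoord (z - p)).1 = rad p z := by simp [rad]
    rw [← hfst, polarCoord.left_inv hsrc, add_sub_cancel]

lemma image_add_polarCoord_symm_eq_halfAnnulus {p : ℝ × ℝ} (hp : p.2 = 0) {ε : ℝ} (hε : 0 ≤ ε)
    (η : ℝ) :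
    (fun q ↦ p + polarCoord.symm q) '' (Ioo ε η ×ˢ Ioo (-π) 0) = halfAnnulus p ε η := by
  ext x
  constructor
  · rintro ⟨⟨r, θ⟩, ⟨hr, hθ⟩, rfl⟩
    have hr0 : 0 < r := hε.trans_lt hr.1
    rw [halfAnnulus, mem_ofPred_eq, rad_add_polarCoord_symm p hr0.le]
    refine ⟨?_, hr⟩
    simpa [hp] using mul_neg_of_pos_of_neg hr0 (sin_neg_of_neg_of_neg_pi_lt hθ.2 hθ.1)
  · rintro ⟨hx, hxr⟩
    obtain ⟨θ, hθ, hxθ⟩ := exists_angle_add_polarCoord_symm hp hx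
    exact ⟨(rad p x, θ), ⟨hxr, hθ⟩, hxθ⟩

lemma lintegral_halfAnnulus_eq {p : ℝ × ℝ} (hp : p.2 = 0) {ε : ℝ} (hε : 0 ≤ ε) (η : ℝ)
    {G : ℝ × ℝ → ENNReal} (hG : Measurable G) :
    ∫⁻ x in halfAnnulus p ε η, G x =
      ∫⁻ ρ in Ioo ε η, ∫⁻ θ in Ioo (-π) 0, ENNReal.ofReal ρ * G (p + polarCoord.symm (ρ, θ)) := by
  set s : Set (ℝ × ℝ) := Ioo ε η ×ˢ Ioo (-π) 0
  have hs : MeasurableSet s := measurableSet_Ioo.prod measurableSet_Ioo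
  have hs_target : s ⊆ polarCoord.target := fun q ⟨hr, hθ⟩ ↦
    ⟨hε.trans_lt hr.1, hθ.1, hθ.2.trans pi_pos⟩
  have hinj : InjOn (fun q ↦ p + polarCoord.symm q) s := fun a ha b hb hab ↦
    polarCoord.symm.injOn (hs_target ha) (hs_target hb) (add_left_cancel hab)
  rw [← image_add_polarCoord_symm_eq_halfAnnulus hp hε η,
    lintegral_image_eq_lintegral_abs_det_fderiv_mul volume hs
      (fun q _ ↦ ((hasFDerivAt_polarCoord_symm q).const_add p).hasFDerivWithinAt) hinj,
    Measure.volume_eq_prod, ← Measure.prod_restrict]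
  simp_rw [det_fderivPolarCoordSymm]
  have hmeas : Measurable fun q : ℝ × ℝ ↦ ENNReal.ofReal |q.1| * G (p + polarCoord.symm q) :=
    (by fun_prop : Measurable fun q : ℝ × ℝ ↦ ENNReal.ofReal |q.1|).mul
      (hG.comp (by fun_prop))
  rw [lintegral_prod _ hmeas.aemeasurable]
  refine setLIntegral_congr_fun measurableSet_Ioo fun ρ hρ ↦ ?_
  simp only [abs_of_pos (hε.trans_lt hρ.1)]

lemma hasDerivAt_add_polarCoord_symm (p : ℝ × ℝ) (ρ θ : ℝ) :
    HasDerivAt (fun t ↦ p + polarCoord.symm (ρ, t)) (ρ * -sin θ, ρ * cos θ) θ := by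
  simp only [polarCoord_symm_apply]
  exact (((hasDerivAt_cos θ).const_mul ρ).prodMk ((hasDerivAt_sin θ).const_mul ρ)).const_add p

lemma sq_intervalIntegral_le_mul {g : ℝ → ℝ} {a b : ℝ} (hab : a ≤ b)
    (hg : IntervalIntegrable g volume a b) (hg2 : IntervalIntegrable (fun t ↦ g t ^ 2) volume a b) :
    (∫ t in a..b, g t) ^ 2 ≤ (b - a) * ∫ t in a..b, g t ^ 2 := by
  -- the quadratic `x ↦ ∫ (g - x)²` is nonnegative, so its discriminant is nonpositive
  have hquad : ∀ x : ℝ, 0 ≤ (b - a) * (x * x) + (-2 * ∫ t in a..b, g t) * x +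
      ∫ t in a..b, g t ^ 2 := by
    intro x
    have hint : ∫ t in a..b, (2 * x * g t - x * x) =
        2 * x * (∫ t in a..b, g t) - (b - a) * (x * x) := by
      rw [intervalIntegral.integral_sub (hg.const_mul _) intervalIntegrable_const,
        intervalIntegral.integral_const_mul, intervalIntegral.integral_const, smul_eq_mul]
    have hle : ∫ t in a..b, (2 * x * g t - x * x) ≤ ∫ t in a..b, g t ^ 2 :=
      intervalIntegral.integral_mono_on hab ((hg.const_mul _).sub intervalIntegrable_const) hg2
        fun t _ ↦ by nlinarith [sq_nonneg (g t - x)]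
    linarith
  have := discrim_le_zero hquad
  rw [discrim] at this
  linarith

lemma lintegral_ofReal_div_Ioo {c ε η : ℝ} (hc : 0 ≤ c) (hε : 0 < ε) (hεη : ε ≤ η) :
    ∫⁻ ρ in Ioo ε η, ENNReal.ofReal (c / ρ) = ENNReal.ofReal (c * log (η / ε)) := by
  have hcont : ContinuousOn (fun ρ ↦ c / ρ) (Icc ε η) :=
    continuousOn_const.div continuousOn_id fun ρ hρ ↦ (hε.trans_le hρ.1).ne'
  rw [setLIntegral_congr Ioo_ae_eq_Ioc, ← ofReal_integral_eq_lintegral_ofReal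
      (hcont.integrableOn_Icc.mono_set Ioc_subset_Icc_self)
      ((ae_restrict_iff' measurableSet_Ioc).2 (Filter.Eventually.of_forall
        fun ρ hρ ↦ div_nonneg hc (hε.trans hρ.1).le)),
    ← intervalIntegral.integral_of_le hεη]
  simp only [div_eq_mul_inv, intervalIntegral.integral_const_mul,
    integral_inv_of_pos hε (hε.trans_le hεη)]

section

variable {E : Type*} [NormedAddCommGroup E] [NormedSpace ℝ E]

lemma norm_apply_sq_le (D : ℝ × ℝ →L[ℝ] E) (a b : ℝ) :
    ‖D (a, b)‖ ^ 2 ≤ (a ^ 2 + b ^ 2) * (‖D (1, 0)‖ ^ 2 + ‖D (0, 1)‖ ^ 2) := by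
  have hD : D (a, b) = a • D (1, 0) + b • D (0, 1) := by
    rw [← map_smul, ← map_smul, ← map_add]; simp
  have htri : ‖D (a, b)‖ ≤ |a| * ‖D (1, 0)‖ + |b| * ‖D (0, 1)‖ := by
    rw [hD]
    exact (norm_add_le _ _).trans_eq (by rw [norm_smul, norm_smul, norm_eq_abs, norm_eq_abs])
  -- Cauchy–Schwarz in `ℝ²`
  nlinarith [sq_abs a, sq_abs b, sq_nonneg (|a| * ‖D (0, 1)‖ - |b| * ‖D (1, 0)‖),
    norm_nonneg (D (a, b)), abs_nonneg a, abs_nonneg b, norm_nonneg (D (1, 0)),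
    norm_nonneg (D (0, 1))]

noncomputable def dirichletDensity (f : ℝ × ℝ → E) (x : ℝ × ℝ) : ℝ :=
  ‖fderiv ℝ f x (1, 0)‖ ^ 2 + ‖fderiv ℝ f x (0, 1)‖ ^ 2

lemma dirichletDensity_nonneg (f : ℝ × ℝ → E) (x : ℝ × ℝ) : 0 ≤ dirichletDensity f x := by
  unfold dirichletDensity; positivity

lemma continuousOn_dirichletDensity {f : ℝ × ℝ → E} {U : Set (ℝ × ℝ)} (hU : IsOpen U)
    (hf : ContDiffOn ℝ 1 f U) : ContinuousOn (dirichletDensity f) U := by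
  have hDf := hf.continuousOn_fderiv_of_isOpen hU le_rfl
  exact ((hDf.clm_apply continuousOn_const).norm.pow 2).add
    ((hDf.clm_apply continuousOn_const).norm.pow 2)

variable [CompleteSpace E]

lemma sq_norm_sub_le_mul_integral_norm_deriv_sq {γ γ' : ℝ → E} {a b : ℝ} (hab : a ≤ b)
    (hγ : ∀ t ∈ Icc a b, HasDerivAt γ (γ' t) t) (hγ' : ContinuousOn γ' (Icc a b)) :
    ‖γ b - γ a‖ ^ 2 ≤ (b - a) * ∫ t in a..b, ‖γ' t‖ ^ 2 := by
  rw [← uIcc_of_le hab] at hγ hγ'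
  have hlen : ‖γ b - γ a‖ ≤ ∫ t in a..b, ‖γ' t‖ := by
    rw [← intervalIntegral.integral_eq_sub_of_hasDerivAt hγ hγ'.intervalIntegrable]
    exact intervalIntegral.norm_integral_le_integral_norm hab
  calc ‖γ b - γ a‖ ^ 2 ≤ (∫ t in a..b, ‖γ' t‖) ^ 2 := by gcongr
    _ ≤ _ := sq_intervalIntegral_le_mul hab hγ'.norm.intervalIntegrable
        (hγ'.norm.pow 2).intervalIntegrable

lemma measurable_dirichletDensity (f : ℝ × ℝ → E) : Measurable (dirichletDensity f) := by
  have h : ∀ v : ℝ × ℝ, Measurable fun x ↦ ‖fderiv ℝ f x v‖ := fun v ↦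
    (continuous_norm.comp (ContinuousLinearMap.apply ℝ E v).continuous).measurable.comp
      (measurable_fderiv ℝ f)
  exact ((h _).pow_const 2).add ((h _).pow_const 2)

lemma sq_norm_sub_le_integral_dirichletDensity_arc {f : ℝ × ℝ → E} {U : Set (ℝ × ℝ)}
    (hU : IsOpen U) (hf : ContDiffOn ℝ 1 f U) (p : ℝ × ℝ) {ρ θ₁ θ₂ : ℝ} (hθ : θ₁ ≤ θ₂)
    (harc : ∀ θ ∈ Icc θ₁ θ₂, p + polarCoord.symm (ρ, θ) ∈ U) :
    ‖f (p + polarCoord.symm (ρ, θ₂)) - f (p + polarCoord.symm (ρ, θ₁))‖ ^ 2 ≤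
      (θ₂ - θ₁) * ρ ^ 2 * ∫ θ in θ₁..θ₂, dirichletDensity f (p + polarCoord.symm (ρ, θ)) := by
  set c : ℝ → ℝ × ℝ := fun θ ↦ p + polarCoord.symm (ρ, θ)
  have hc : Continuous c := by fun_prop
  set γ' : ℝ → E := fun θ ↦ fderiv ℝ f (c θ) (ρ * -sin θ, ρ * cos θ)
  have hγ : ∀ θ ∈ Icc θ₁ θ₂, HasDerivAt (f ∘ c) (γ' θ) θ := fun θ hθ ↦
    (((hf.differentiableOn one_ne_zero) _ (harc θ hθ)).differentiableAt
      (hU.mem_nhds (harc θ hθ))).hasFDerivAt.comp_hasDerivAt θ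
      (hasDerivAt_add_polarCoord_symm p ρ θ)
  have hγ' : ContinuousOn γ' (Icc θ₁ θ₂) :=
    ((hf.continuousOn_fderiv_of_isOpen hU le_rfl).comp hc.continuousOn harc).clm_apply
      (by fun_prop)
  have hdens : ContinuousOn (fun θ ↦ dirichletDensity f (c θ)) (Icc θ₁ θ₂) :=
    (continuousOn_dirichletDensity hU hf).comp hc.continuousOn harc
  have hspeed : ∀ θ ∈ Icc θ₁ θ₂, ‖γ' θ‖ ^ 2 ≤ ρ ^ 2 * dirichletDensity f (c θ) := by
    intro θ _
    have hρ : (ρ * -sin θ) ^ 2 + (ρ * cos θ) ^ 2 = ρ ^ 2 := by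
      linear_combination ρ ^ 2 * sin_sq_add_cos_sq θ
    have := norm_apply_sq_le (fderiv ℝ f (c θ)) (ρ * -sin θ) (ρ * cos θ)
    rwa [hρ] at this
  rw [← uIcc_of_le hθ] at hγ' hdens
  calc ‖f (c θ₂) - f (c θ₁)‖ ^ 2 ≤ (θ₂ - θ₁) * ∫ θ in θ₁..θ₂, ‖γ' θ‖ ^ 2 :=
        sq_norm_sub_le_mul_integral_norm_deriv_sq hθ hγ (uIcc_of_le hθ ▸ hγ')
    _ ≤ (θ₂ - θ₁) * ∫ θ in θ₁..θ₂, ρ ^ 2 * dirichletDensity f (c θ) := by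
        gcongr
        exact intervalIntegral.integral_mono_on hθ (hγ'.norm.pow 2).intervalIntegrable
          (hdens.const_smul (ρ ^ 2)).intervalIntegrable hspeed
    _ = _ := by rw [intervalIntegral.integral_const_mul, mul_assoc]

lemma ofReal_sq_norm_sub_div_le_lintegral_halfCircle {f : ℝ × ℝ → E} {U : Set (ℝ × ℝ)}
    (hU : IsOpen U) (hf : ContDiffOn ℝ 1 f U) {p : ℝ × ℝ} (hp : p.2 = 0) {ρ : ℝ} (hρ : 0 < ρ)
    (hcirc : ∀ θ ∈ Ioo (-π) 0, p + polarCoord.symm (ρ, θ) ∈ U) {x y : ℝ × ℝ}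
    (hx : x.2 < 0) (hy : y.2 < 0) (hxρ : rad p x = ρ) (hyρ : rad p y = ρ) :
    ENNReal.ofReal (‖f x - f y‖ ^ 2 / (π * ρ)) ≤
      ∫⁻ θ in Ioo (-π) 0,
        ENNReal.ofReal ρ * ENNReal.ofReal (dirichletDensity f (p + polarCoord.symm (ρ, θ))) := by
  obtain ⟨θx, hθx, rfl⟩ := hxρ ▸ exists_angle_add_polarCoord_symm hp hx
  obtain ⟨θy, hθy, rfl⟩ := hyρ ▸ exists_angle_add_polarCoord_symm hp hy
  clear hx hy hxρ hyρ
  wlog hθ : θy ≤ θx generalizing θx θy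
  · rw [norm_sub_rev]
    exact this θy hθy θx hθx (le_of_not_ge hθ)
  have hIcc : Icc θy θx ⊆ Ioo (-π) 0 := Icc_subset_Ioo hθy.1 hθx.2
  set F : ℝ → ℝ := fun θ ↦ ρ * dirichletDensity f (p + polarCoord.symm (ρ, θ))
  have hF : ContinuousOn F (Icc θy θx) :=
    continuousOn_const.mul ((continuousOn_dirichletDensity hU hf).comp (by fun_prop)
      fun θ hθ ↦ hcirc θ (hIcc hθ))
  have hF0 : 0 ≤ F := fun θ ↦ mul_nonneg hρ.le (dirichletDensity_nonneg _ _)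
  have hreal : ‖f (p + polarCoord.symm (ρ, θx)) - f (p + polarCoord.symm (ρ, θy))‖ ^ 2 / (π * ρ) ≤
      ∫ θ in Ioc θy θx, F θ := by
    rw [← intervalIntegral.integral_of_le hθ, intervalIntegral.integral_const_mul,
      div_le_iff₀ (by positivity)]
    have hI : 0 ≤ ∫ θ in θy..θx, dirichletDensity f (p + polarCoord.symm (ρ, θ)) :=
      intervalIntegral.integral_nonneg hθ fun θ _ ↦ dirichletDensity_nonneg _ _
    have hlen : θx - θy ≤ π := by linarith [hθy.1, hθx.2]
    nlinarith [mul_le_mul_of_nonneg_right hlen (mul_nonneg (sq_nonneg ρ) hI),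
      sq_norm_sub_le_integral_dirichletDensity_arc hU hf p hθ fun θ hθ ↦ hcirc θ (hIcc hθ)]
  calc _ ≤ ENNReal.ofReal (∫ θ in Ioc θy θx, F θ) := ENNReal.ofReal_le_ofReal hreal
    _ = ∫⁻ θ in Ioc θy θx, ENNReal.ofReal (F θ) :=
        ofReal_integral_eq_lintegral_ofReal (hF.integrableOn_Icc.mono_set Ioc_subset_Icc_self)
          (Filter.Eventually.of_forall hF0)
    _ ≤ ∫⁻ θ in Ioo (-π) 0, ENNReal.ofReal (F θ) :=
        lintegral_mono_set (Ioc_subset_Icc_self.trans hIcc)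
    _ = _ := by simp only [F, ENNReal.ofReal_mul hρ.le]

lemma ofReal_mul_log_le_lintegral_dirichletDensity {f : ℝ × ℝ → E} {p : ℝ × ℝ} (hp : p.2 = 0)
    {ε η δ : ℝ} (hε : 0 < ε) (hεη : ε ≤ η) (hδ : 0 ≤ δ)
    (hf : ContDiffOn ℝ 1 f (halfAnnulus p ε η))
    (hosc : ∀ ρ : ℝ, ε < ρ → ρ < η → ∃ x y : ℝ × ℝ,
      x.2 < 0 ∧ y.2 < 0 ∧ rad p x = ρ ∧ rad p y = ρ ∧ δ ≤ ‖f x - f y‖) :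
    ENNReal.ofReal (δ ^ 2 / π * log (η / ε)) ≤
      ∫⁻ x in halfAnnulus p ε η, ENNReal.ofReal (dirichletDensity f x) := by
  rw [lintegral_halfAnnulus_eq hp hε.le η (measurable_dirichletDensity f).ennreal_ofReal,
    ← lintegral_ofReal_div_Ioo (by positivity) hε hεη]
  refine setLIntegral_mono' measurableSet_Ioo fun ρ hρ ↦ ?_
  have hρ0 : 0 < ρ := hε.trans hρ.1
  obtain ⟨x, y, hx, hy, hxρ, hyρ, hxy⟩ := hosc ρ hρ.1 hρ.2
  have hcirc : ∀ θ ∈ Ioo (-π) 0, p + polarCoord.symm (ρ, θ) ∈ halfAnnulus p ε η :=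
    fun θ hθ ↦ image_add_polarCoord_symm_eq_halfAnnulus hp hε.le η ▸
      mem_image_of_mem _ (mk_mem_prod hρ hθ)
  calc ENNReal.ofReal (δ ^ 2 / π / ρ) ≤ ENNReal.ofReal (‖f x - f y‖ ^ 2 / (π * ρ)) := by
        rw [div_div]
        gcongr
    _ ≤ _ := ofReal_sq_norm_sub_div_le_lintegral_halfCircle (isOpen_halfAnnulus p ε η) hf hp
        hρ0 hcirc hx hy hxρ hyρ

lemma lintegral_dirichletDensity_punctured_eq_top {f : ℝ × ℝ → E} {p : ℝ × ℝ} (hp : p.2 = 0)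
    {η δ : ℝ} (hη : 0 < η) (hδ : 0 < δ) (hf : ContDiffOn ℝ 1 f (halfAnnulus p 0 η))
    (hosc : ∀ ρ : ℝ, 0 < ρ → ρ < η → ∃ x y : ℝ × ℝ,
      x.2 < 0 ∧ y.2 < 0 ∧ rad p x = ρ ∧ rad p y = ρ ∧ δ ≤ ‖f x - f y‖) :
    ∫⁻ x in halfAnnulus p 0 η, ENNReal.ofReal (dirichletDensity f x) = ⊤ := by
  refine ENNReal.eq_top_of_forall_nnreal_le fun r ↦ ?_
  -- the inner radius at which the logarithmic bound equals `r`
  set ε := η * exp (-(r * π / δ ^ 2))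
  have hε : 0 < ε := by positivity
  have hεη : ε ≤ η := mul_le_of_le_one_right hη.le (exp_le_one_iff.2 (neg_nonpos.2 (by positivity)))
  have hsub : halfAnnulus p ε η ⊆ halfAnnulus p 0 η :=
    fun x hx ↦ ⟨hx.1, hε.trans hx.2.1, hx.2.2⟩
  have hlog : δ ^ 2 / π * log (η / ε) = r := by
    rw [div_mul_cancel_left₀ hη.ne', log_inv, log_exp]
    field_simp
  calc (r : ENNReal) = ENNReal.ofReal (δ ^ 2 / π * log (η / ε)) := by
        rw [hlog, ENNReal.ofReal_coe_nnreal]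
    _ ≤ ∫⁻ x in halfAnnulus p ε η, ENNReal.ofReal (dirichletDensity f x) :=
        ofReal_mul_log_le_lintegral_dirichletDensity hp hε hεη hδ.le (hf.mono hsub)
          fun ρ hρ hρη ↦ hosc ρ (hε.trans hρ) hρη
    _ ≤ _ := lintegral_mono_set hsub

end

theorem statement16_general {n : ℕ} (p : ℝ × ℝ) (hp : p.2 = 0)
    (ε η δ : ℝ) (hε : 0 < ε) (hεη : ε < η) (hδ : 0 < δ)
    (f : ℝ × ℝ → EuclideanSpace ℝ (Fin n))
    (hf : ContDiffOn ℝ 1 f {x : ℝ × ℝ | x.2 < 0 ∧ ε < rad p x ∧ rad p x < η})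
    (hosc : ∀ ρ : ℝ, ε < ρ → ρ < η → ∃ x y : ℝ × ℝ,
      x.2 < 0 ∧ y.2 < 0 ∧ rad p x = ρ ∧ rad p y = ρ ∧ δ ≤ ‖f x - f y‖) :
    (ENNReal.ofReal (δ ^ 2 / Real.pi * Real.log (η / ε)) ≤
      ∫⁻ x in {x : ℝ × ℝ | x.2 < 0 ∧ ε < rad p x ∧ rad p x < η},
        ENNReal.ofReal (‖fderiv ℝ f x ((1:ℝ), (0:ℝ))‖ ^ 2 + ‖fderiv ℝ f x ((0:ℝ), (1:ℝ))‖ ^ 2)) ∧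
    (∀ g : ℝ × ℝ → EuclideanSpace ℝ (Fin n),
      ContDiffOn ℝ 1 g {x : ℝ × ℝ | x.2 < 0 ∧ 0 < rad p x ∧ rad p x < η} →
      (∀ ρ : ℝ, 0 < ρ → ρ < η → ∃ x y : ℝ × ℝ,
        x.2 < 0 ∧ y.2 < 0 ∧ rad p x = ρ ∧ rad p y = ρ ∧ δ ≤ ‖g x - g y‖) →
      ∫⁻ x in {x : ℝ × ℝ | x.2 < 0 ∧ 0 < rad p x ∧ rad p x < η},
        ENNReal.ofReal (‖fderiv ℝ g x ((1:ℝ), (0:ℝ))‖ ^ 2 + ‖fderiv ℝ g x ((0:ℝ), (1:ℝ))‖ ^ 2)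
        = ⊤) :=
  ⟨ofReal_mul_log_le_lintegral_dirichletDensity hp hε hεη.le hδ.le hf hosc,
    fun _ hg hgosc ↦ lintegral_dirichletDensity_punctured_eq_top hp (hε.trans hεη) hδ hg hgosc⟩

/-- Courant–Lebesgue lower bound: if `f` is `C¹` on the open lower half-annulus
`A = {x₂ < 0, ε < |x − p| < η}` (with `p` on the boundary line) and on every half-circle of
radius `ρ ∈ (ε,η)` the values of `f` oscillate by at least `δ`, then
`∬_A ‖Df‖² ≥ (δ²/π) log(η/ε)`. In particular, if the oscillation hypothesis holds on all of
`(0,η)` for a `C¹` map on the punctured half-disk, the Dirichlet energy there is infinite. -/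
theorem statement16 {n : ℕ} (hn : 1 ≤ n) (p : ℝ × ℝ) (hp : p.2 = 0)
    (ε η δ : ℝ) (hε : 0 < ε) (hεη : ε < η) (hδ : 0 < δ)
    (f : ℝ × ℝ → EuclideanSpace ℝ (Fin n))
    (hf : ContDiffOn ℝ 1 f {x : ℝ × ℝ | x.2 < 0 ∧ ε < rad p x ∧ rad p x < η})
    (hosc : ∀ ρ : ℝ, ε < ρ → ρ < η → ∃ x y : ℝ × ℝ,
      x.2 < 0 ∧ y.2 < 0 ∧ rad p x = ρ ∧ rad p y = ρ ∧ δ ≤ ‖f x - f y‖) :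
    (ENNReal.ofReal (δ ^ 2 / Real.pi * Real.log (η / ε)) ≤
      ∫⁻ x in {x : ℝ × ℝ | x.2 < 0 ∧ ε < rad p x ∧ rad p x < η},
        ENNReal.ofReal (‖fderiv ℝ f x ((1:ℝ), (0:ℝ))‖ ^ 2 + ‖fderiv ℝ f x ((0:ℝ), (1:ℝ))‖ ^ 2)) ∧
    (∀ g : ℝ × ℝ → EuclideanSpace ℝ (Fin n),
      ContDiffOn ℝ 1 g {x : ℝ × ℝ | x.2 < 0 ∧ 0 < rad p x ∧ rad p x < η} →
      (∀ ρ : ℝ, 0 < ρ → ρ < η → ∃ x y : ℝ × ℝ,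
        x.2 < 0 ∧ y.2 < 0 ∧ rad p x = ρ ∧ rad p y = ρ ∧ δ ≤ ‖g x - g y‖) →
      ∫⁻ x in {x : ℝ × ℝ | x.2 < 0 ∧ 0 < rad p x ∧ rad p x < η},
        ENNReal.ofReal (‖fderiv ℝ g x ((1:ℝ), (0:ℝ))‖ ^ 2 + ‖fderiv ℝ g x ((0:ℝ), (1:ℝ))‖ ^ 2)
        = ⊤) :=
  statement16_general p hp ε η δ hε hεη hδ f hf hosc
end
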